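/- arXiv:1511.07730 — 6 statements merged into one kernel-verified Lean document; each statement's English description precedes it below -/
import Mathlib

section
/- Let β = (b, δ) be a signed permutation and C_s a cycle of b with minimal element k. If |δ ∩ C_s| is odd and x ∈ ℝⁿ satisfies x_j = (-1)^{|δ ∩ {j}|} x_{b⁻¹(j)} for all j ∈ [n], then x_k = 0. -/
open Equiv Finset

/-- The cycle (as a finset) of `b` containing `i`. -/
def cyc {n : ℕ} (b : Equiv.Perm (Fin n)) (i : Fin n) : Finset (Fin n) :=
  Finset.univ.filter (b.SameCycle i)

/-!
Multiplying the relations `x j = ± x (b⁻¹ j)` over the cycle `C` of `k`, and using that `b⁻¹`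
permutes `C`, gives `∏_{j ∈ C} x j = (-1) ^ |δ ∩ C| ∏_{j ∈ C} x j = -∏_{j ∈ C} x j`, so some
`x j` with `j ∈ C` vanishes. Since the signs are `±1`, `|x|` is `b`-invariant, hence constant on
`C`, and `x k = 0`.
-/

theorem Equiv.Perm.SameCycle.apply_eq_of_invariant {α β : Type*} {b : Perm α}
    {f : α → β} (hf : ∀ i, f (b i) = f i) {i j : α} (h : b.SameCycle i j) : f i = f j := by
  obtain ⟨z, rfl⟩ := h
  induction z using Int.induction_on generalizing i with
  | zero => rfl
  | succ z ih => rw [zpow_add_one, mul_apply, ← ih, hf]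
  | pred z ih =>
    rw [sub_eq_add_neg, zpow_add, zpow_neg_one, mul_apply, ← ih, ← hf (b⁻¹ i), Perm.coe_inv,
      apply_symm_apply]

theorem mem_cyc {n : ℕ} {b : Perm (Fin n)} {i j : Fin n} : j ∈ cyc b i ↔ b.SameCycle i j := by
  simp [cyc]

theorem prod_cyc_comp_inv {M : Type*} [CommMonoid M] {n : ℕ} (b : Perm (Fin n)) (i : Fin n)
    (f : Fin n → M) : ∏ j ∈ cyc b i, f (b⁻¹ j) = ∏ j ∈ cyc b i, f j :=
  prod_equiv b⁻¹ (fun j => by simp [mem_cyc]) (fun _ _ => rfl)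

theorem prod_neg_one_pow_card_inter_singleton {α M : Type*} [DecidableEq α] [CommMonoid M]
    [HasDistribNeg M] (δ s : Finset α) :
    ∏ j ∈ s, (-1 : M) ^ (δ ∩ {j}).card = (-1) ^ (δ ∩ s).card := by
  rw [prod_pow_eq_pow_sum, inter_comm δ s, ← filter_mem_eq_inter, card_filter]
  congr 1
  refine sum_congr rfl fun j _ => ?_
  by_cases hj : j ∈ δ <;> simp [hj]

theorem coord_eq_zero_of_odd_cycle_general {n : ℕ} (b : Equiv.Perm (Fin n))
    (δ : Finset (Fin n)) (k : Fin n)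
    (hodd : Odd ((δ ∩ cyc b k).card))
    (x : Fin n → ℝ)
    (hx : ∀ j : Fin n, x j = (-1 : ℝ) ^ ((δ ∩ {j}).card) * x (b⁻¹ j)) :
    x k = 0 := by
  have hprod : ∏ j ∈ cyc b k, x j = -∏ j ∈ cyc b k, x j := calc
    ∏ j ∈ cyc b k, x j
        = (∏ j ∈ cyc b k, (-1 : ℝ) ^ (δ ∩ {j}).card) * ∏ j ∈ cyc b k, x (b⁻¹ j) := by
      rw [← prod_mul_distrib]
      exact prod_congr rfl fun j _ => hx j
    _ = -∏ j ∈ cyc b k, x j := by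
      rw [prod_neg_one_pow_card_inter_singleton, hodd.neg_one_pow, prod_cyc_comp_inv, neg_one_mul]
  obtain ⟨j, hj, hxj⟩ := prod_eq_zero_iff.mp (self_eq_neg.mp hprod)
  have habs : ∀ i, |x (b i)| = |x i| := fun i => by
    rw [hx (b i), abs_mul, abs_neg_one_pow, one_mul, Perm.coe_inv, symm_apply_apply]
  simpa [hxj] using (mem_cyc.mp hj).apply_eq_of_invariant (f := fun i => |x i|) habs

theorem coord_eq_zero_of_odd_cycle {n : ℕ} (b : Equiv.Perm (Fin n))
    (δ : Finset (Fin n)) (k : Fin n)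
    (hmin : ∀ j, b.SameCycle k j → k ≤ j)
    (hodd : Odd ((δ ∩ cyc b k).card))
    (x : Fin n → ℝ)
    (hx : ∀ j : Fin n, x j = (-1 : ℝ) ^ ((δ ∩ {j}).card) * x (b⁻¹ j)) :
    x k = 0 :=
  coord_eq_zero_of_odd_cycle_general b δ k hodd x hx
end

section
/- Let A be a finite central hyperplane arrangement in ℝⁿ whose hyperplanes are among those of the type-BC Coxeter arrangement (x_i = ±x_j for i < j, and x_i = 0). Then on any flat p of L(BC_n) of dimension i, the number of points of ([-k,k] ∩ ℤ)ⁿ lying on p but on no flat strictly below p (i.e., whose minimal containing flat of BC_n is p) equals 2^i · k(k-1)⋯(k-i+1). -/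
/-- The type-BC Coxeter arrangement in dimension `n`. -/
def BCn (n : ℕ) : Set (Set (Fin n → ℝ)) :=
  {H | (∃ i j : Fin n, i ≠ j ∧
      (H = {x | x i = x j} ∨ H = {x | x i = -x j})) ∨
    ∃ i : Fin n, H = {x | x i = 0}}

/-- A flat of the intersection lattice `L(BC_n)`: an intersection of a
subcollection of the hyperplanes (the empty intersection being `ℝⁿ`). -/
def IsFlat (n : ℕ) (p : Set (Fin n → ℝ)) : Prop :=
  ∃ S ⊆ BCn n, p = ⋂₀ S

namespace BCAux

variable {n : ℕ} (p : Set (Fin n → ℝ))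

def R1 (t u : Fin n) : Prop := p ⊆ {x | x t = x u}
def R2 (t u : Fin n) : Prop := p ⊆ {x | x t = -x u}
def rel (t u : Fin n) : Prop := R1 p t u ∨ R2 p t u
def Tm (t : Fin n) : Prop := ¬ R2 p t t

variable {p}

lemma r1_refl (t : Fin n) : R1 p t t := fun _ _ => rfl

lemma rel_refl (t : Fin n) : rel p t t := Or.inl (r1_refl t)

lemma rel_symm {t u : Fin n} (h : rel p t u) : rel p u t := by
  rcases h with h | h
  · exact Or.inl fun x hx => (h hx).symm
  · refine Or.inr fun x hx => ?_
    have := h hx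
    simp only [Set.mem_setOf_eq] at this ⊢
    linarith

lemma rel_trans {t u v : Fin n} (h1 : rel p t u) (h2 : rel p u v) : rel p t v := by
  rcases h1 with h1 | h1 <;> rcases h2 with h2 | h2
  · exact Or.inl fun x hx => (h1 hx).trans (h2 hx)
  · refine Or.inr fun x hx => ?_
    have a := h1 hx; have b := h2 hx
    simp only [Set.mem_setOf_eq] at a b ⊢; linarith
  · refine Or.inr fun x hx => ?_
    have a := h1 hx; have b := h2 hx
    simp only [Set.mem_setOf_eq] at a b ⊢; linarith
  · refine Or.inl fun x hx => ?_
    have a := h1 hx; have b := h2 hx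
    simp only [Set.mem_setOf_eq] at a b ⊢; linarith

lemma Tm_of_rel {t u : Fin n} (h : rel p t u) (ht : Tm p t) : Tm p u := by
  intro hu
  apply ht
  intro x hx
  have b := hu hx
  simp only [Set.mem_setOf_eq] at b ⊢
  rcases h with h | h
  · have a := h hx; simp only [Set.mem_setOf_eq] at a; linarith
  · have a := h hx; simp only [Set.mem_setOf_eq] at a; linarith

open Classical in
noncomputable def rep (p : Set (Fin n → ℝ)) (t : Fin n) : Fin n :=
  (Finset.univ.filter (fun u => rel p t u)).min'
    ⟨t, by simp [Finset.mem_filter, rel_refl]⟩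

lemma rel_rep (t : Fin n) : rel p t (rep p t) := by
  classical
  have := Finset.min'_mem (Finset.univ.filter (fun u => rel p t u))
    ⟨t, by simp [Finset.mem_filter, rel_refl]⟩
  simpa [rep, Finset.mem_filter] using this

lemma rep_eq_of_rel {t u : Fin n} (h : rel p t u) : rep p t = rep p u := by
  classical
  have hs : (Finset.univ.filter (fun v => rel p t v)) =
      (Finset.univ.filter (fun v => rel p u v)) := by
    ext v
    simp only [Finset.mem_filter, Finset.mem_univ, true_and]
    exact ⟨fun hv => rel_trans (rel_symm h) hv, fun hv => rel_trans h hv⟩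
  simp only [rep, hs]

lemma rep_rep (t : Fin n) : rep p (rep p t) = rep p t :=
  (rep_eq_of_rel (rel_rep t)).symm

lemma Tm_rep {t : Fin n} (ht : Tm p t) : Tm p (rep p t) :=
  Tm_of_rel (rel_rep t) ht

open Classical in
noncomputable def sg (p : Set (Fin n → ℝ)) (t : Fin n) : ℤ :=
  if Tm p t then (if R1 p t (rep p t) then 1 else -1) else 0

lemma sg_rep {t : Fin n} (ht : Tm p t) : sg p (rep p t) = 1 := by
  classical
  have h1 : R1 p (rep p t) (rep p (rep p t)) := by
    rw [rep_rep]; exact r1_refl _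
  simp [sg, Tm_rep ht, h1]

lemma sg_self {t : Fin n} (ht : Tm p t) (h : rep p t = t) : sg p t = 1 := by
  classical
  have h1 : R1 p t (rep p t) := by rw [h]; exact r1_refl _
  simp [sg, ht, h1]

lemma sg_zero {t : Fin n} (ht : ¬ Tm p t) : sg p t = 0 := by simp [sg, ht]

lemma subset_constraint (t : Fin n) :
    p ⊆ {x | x t = (sg p t : ℝ) * x (rep p t)} := by
  classical
  intro x hx
  simp only [Set.mem_setOf_eq]
  by_cases ht : Tm p t
  · by_cases h1 : R1 p t (rep p t)
    · have := h1 hx; simp only [Set.mem_setOf_eq] at this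
      simp [sg, ht, h1, this]
    · have h2 : R2 p t (rep p t) := (rel_rep t).resolve_left h1
      have := h2 hx; simp only [Set.mem_setOf_eq] at this
      simp [sg, ht, h1]; linarith
  · have h2 : R2 p t t := not_not.mp ht
    have := h2 hx; simp only [Set.mem_setOf_eq] at this
    simp [sg, ht]; linarith

end BCAux
namespace BCAux
variable {n : ℕ} {p : Set (Fin n → ℝ)}

lemma sg_of_r1 {t u : Fin n} (ht : Tm p t) (h : R1 p t u) : sg p t = sg p u := by
  classical
  have hu : Tm p u := Tm_of_rel (Or.inl h) ht
  have hrr : rep p t = rep p u := rep_eq_of_rel (Or.inl h)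
  by_cases h1 : R1 p t (rep p t) <;> by_cases h2 : R1 p u (rep p u)
  · simp [sg, ht, hu, h1, h2]
  · exfalso
    have h2' : R2 p u (rep p u) := (rel_rep u).resolve_left h2
    apply Tm_rep ht
    intro x hx
    have a := h1 hx; have b := h2' hx; have c := h hx
    simp only [Set.mem_setOf_eq, hrr] at a b c ⊢
    linarith
  · exfalso
    have h1' : R2 p t (rep p t) := (rel_rep t).resolve_left h1
    apply Tm_rep ht
    intro x hx
    have a := h1' hx; have b := h2 hx; have c := h hx
    simp only [Set.mem_setOf_eq, hrr] at a b c ⊢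
    linarith
  · simp [sg, ht, hu, h1, h2]

lemma sg_of_r2 {t u : Fin n} (ht : Tm p t) (h : R2 p t u) : sg p t = -sg p u := by
  classical
  have hu : Tm p u := Tm_of_rel (Or.inr h) ht
  have hrr : rep p t = rep p u := rep_eq_of_rel (Or.inr h)
  by_cases h1 : R1 p t (rep p t) <;> by_cases h2 : R1 p u (rep p u)
  · exfalso
    apply Tm_rep ht
    intro x hx
    have a := h1 hx; have b := h2 hx; have c := h hx
    simp only [Set.mem_setOf_eq, hrr] at a b c ⊢
    linarith
  · simp [sg, ht, hu, h1, h2]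
  · simp [sg, ht, hu, h1, h2]
  · exfalso
    have h1' : R2 p t (rep p t) := (rel_rep t).resolve_left h1
    have h2' : R2 p u (rep p u) := (rel_rep u).resolve_left h2
    apply Tm_rep ht
    intro x hx
    have a := h1' hx; have b := h2' hx; have c := h hx
    simp only [Set.mem_setOf_eq, hrr] at a b c ⊢
    linarith

lemma not_Tm_iff_subset (t : Fin n) : ¬ Tm p t ↔ p ⊆ {x | x t = 0} := by
  constructor
  · intro h x hx
    have := (not_not.mp h) hx
    simp only [Set.mem_setOf_eq] at this ⊢
    linarith
  · intro h hc
    exact hc fun x hx => by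
      have := h hx; simp only [Set.mem_setOf_eq] at this ⊢; linarith

lemma mem_iff (hp : IsFlat n p) (x : Fin n → ℝ) :
    x ∈ p ↔ ∀ t, x t = (sg p t : ℝ) * x (rep p t) := by
  constructor
  · intro hx t
    exact subset_constraint t hx
  · intro hx
    have fact1 : ∀ a b : Fin n, R1 p a b → x a = x b := by
      intro a b h
      by_cases ha : Tm p a
      · have hb : Tm p b := Tm_of_rel (Or.inl h) ha
        have e1 := hx a; have e2 := hx b
        rw [rep_eq_of_rel (Or.inl h), sg_of_r1 ha h] at e1
        rw [e1, e2]
      · have hb : ¬ Tm p b := fun hb => ha (Tm_of_rel (rel_symm (Or.inl h)) hb)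
        have e1 := hx a; have e2 := hx b
        rw [sg_zero ha] at e1; rw [sg_zero hb] at e2
        simp at e1 e2; rw [e1, e2]
    have fact2 : ∀ a b : Fin n, R2 p a b → x a = -x b := by
      intro a b h
      by_cases ha : Tm p a
      · have hb : Tm p b := Tm_of_rel (Or.inr h) ha
        have e1 := hx a; have e2 := hx b
        rw [rep_eq_of_rel (Or.inr h), sg_of_r2 ha h] at e1
        rw [e1, e2]; push_cast; ring
      · have hb : ¬ Tm p b := fun hb => ha (Tm_of_rel (rel_symm (Or.inr h)) hb)
        have e1 := hx a; have e2 := hx b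
        rw [sg_zero ha] at e1; rw [sg_zero hb] at e2
        simp at e1 e2; rw [e1, e2]; ring
    obtain ⟨S, hS, rfl⟩ := hp
    intro H hH
    have hpH : ⋂₀ S ⊆ H := Set.sInter_subset_of_mem hH
    rcases hS hH with ⟨a, b, _hab, hf | hf⟩ | ⟨a, hf⟩
    · subst hf
      exact fact1 a b hpH
    · subst hf
      exact fact2 a b hpH
    · subst hf
      have h2 : R2 (⋂₀ S) a a := by
        intro y hy
        have := hpH hy
        simp only [Set.mem_setOf_eq] at this ⊢
        linarith
      have := fact2 a a h2
      simp only [Set.mem_setOf_eq]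
      linarith

end BCAux
namespace BCAux
variable {n : ℕ} (p : Set (Fin n → ℝ))

noncomputable def Pmod : Submodule ℝ (Fin n → ℝ) where
  carrier := {x | ∀ t, x t = (sg p t : ℝ) * x (rep p t)}
  add_mem' := by
    intro a b ha hb t
    simp only [Pi.add_apply, ha t, hb t]; ring
  zero_mem' := by intro t; simp
  smul_mem' := by
    intro c a ha t
    simp only [Pi.smul_apply, smul_eq_mul, ha t]; ring

open Classical in
noncomputable def Rs : Finset (Fin n) :=
  Finset.univ.filter (fun t => Tm p t ∧ rep p t = t)

variable {p}

open Classical in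
lemma mem_Rs {t : Fin n} : t ∈ Rs p ↔ Tm p t ∧ rep p t = t := by
  simp [Rs]

lemma rep_mem_Rs {t : Fin n} (ht : Tm p t) : rep p t ∈ Rs p :=
  mem_Rs.mpr ⟨Tm_rep ht, rep_rep t⟩

lemma p_eq_Pmod (hp : IsFlat n p) : p = (Pmod p : Set (Fin n → ℝ)) := by
  ext x
  rw [mem_iff hp]
  rfl

noncomputable def resMap : Pmod p →ₗ[ℝ] ({t // t ∈ Rs p} → ℝ) where
  toFun := fun x s => x.1 s.1
  map_add' := fun a b => rfl
  map_smul' := fun c a => rfl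

lemma resMap_bij : Function.Bijective (resMap (p := p)) := by
  constructor
  · intro a b hab
    ext t
    have ha := a.2 t; have hb := b.2 t
    by_cases ht : Tm p t
    · have : a.1 (rep p t) = b.1 (rep p t) := by
        have := congrFun hab ⟨rep p t, rep_mem_Rs ht⟩
        exact this
      rw [ha, hb, this]
    · rw [ha, hb, sg_zero ht]; simp
  · intro v
    classical
    set v' : Fin n → ℝ := fun t => if h : t ∈ Rs p then v ⟨t, h⟩ else 0 with hv'
    set x : Fin n → ℝ := fun t => (sg p t : ℝ) * v' (rep p t) with hxdef
    have hxP : x ∈ Pmod p := by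
      intro t
      by_cases ht : Tm p t
      · have : x (rep p t) = v' (rep p t) := by
          simp only [hxdef, rep_rep t, sg_rep ht]
          norm_num
        rw [this]
      · simp [hxdef, sg_zero ht]
    refine ⟨⟨x, hxP⟩, ?_⟩
    ext s
    obtain ⟨t, ht⟩ := s
    obtain ⟨ht1, ht2⟩ := mem_Rs.mp ht
    show x t = v ⟨t, ht⟩
    simp only [hxdef, ht2, sg_self ht1 ht2, hv']
    simp [ht]

lemma finrank_eq_card : Module.finrank ℝ (Pmod p) = (Rs p).card := by
  classical
  have e := LinearEquiv.ofBijective (resMap (p := p)) resMap_bij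
  rw [e.finrank_eq]
  rw [Module.finrank_fintype_fun_eq_card]
  simp

lemma min_iff (y : Fin n → ℝ) :
    (∀ q, IsFlat n q → y ∈ q → p ⊆ q) ↔ (∀ H ∈ BCn n, y ∈ H → p ⊆ H) := by
  constructor
  · intro h H hH hy
    have : IsFlat n H := ⟨{H}, by simpa using hH, by simp⟩
    exact h H this hy
  · intro h q hq hy
    obtain ⟨S, hS, rfl⟩ := hq
    intro z hz
    rw [Set.mem_sInter]
    intro H hH
    exact h H (hS hH) (hy H hH) hz

end BCAux
namespace BCAux
variable {n : ℕ} {p : Set (Fin n → ℝ)}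

def Lat (p : Set (Fin n → ℝ)) (k : ℕ) : Type :=
  {x : Fin n → ℤ //
        (∀ t, |x t| ≤ (k : ℤ)) ∧
        (fun t => (x t : ℝ)) ∈ p ∧
        ∀ q, IsFlat n q → (fun t => (x t : ℝ)) ∈ q → p ⊆ q}

lemma sg_cases {t : Fin n} (ht : Tm p t) : sg p t = 1 ∨ sg p t = -1 := by
  classical
  simp only [sg, if_pos ht]
  split <;> simp

lemma lat_rec (hp : IsFlat n p) {k : ℕ} (x : Lat p k) (t : Fin n) :
    x.1 t = sg p t * x.1 (rep p t) := by
  have := (mem_iff hp _).mp x.2.2.1 t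
  exact_mod_cast this

lemma lat_min {k : ℕ} (x : Lat p k) :
    ∀ H ∈ BCn n, (fun t => ((x.1 t : ℝ))) ∈ H → p ⊆ H :=
  (min_iff _).mp x.2.2.2

lemma lat_ne_zero {k : ℕ} (x : Lat p k) {t : Fin n} (ht : Tm p t) : x.1 t ≠ 0 := by
  intro h0
  have hH : {y : Fin n → ℝ | y t = 0} ∈ BCn n := Or.inr ⟨t, rfl⟩
  have hx : (fun u => ((x.1 u : ℝ))) ∈ {y : Fin n → ℝ | y t = 0} := by
    simp [h0]
  have := lat_min x _ hH hx
  exact (not_Tm_iff_subset t).mpr this ht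

lemma lat_abs_le {k : ℕ} (x : Lat p k) (t : Fin n) : (x.1 t).natAbs ≤ k := by
  have := x.2.1 t
  rw [Int.abs_eq_natAbs] at this
  exact_mod_cast this

lemma lat_natAbs_inj {k : ℕ} (x : Lat p k) {s u : Fin n}
    (hs : s ∈ Rs p) (hu : u ∈ Rs p)
    (h : (x.1 s).natAbs = (x.1 u).natAbs) : s = u := by
  by_contra hne
  have hcase : x.1 s = x.1 u ∨ x.1 s = -x.1 u := by omega
  rcases hcase with hc | hc
  · have hH : {y : Fin n → ℝ | y s = y u} ∈ BCn n := Or.inl ⟨s, u, hne, Or.inl rfl⟩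
    have hx : (fun v => ((x.1 v : ℝ))) ∈ {y : Fin n → ℝ | y s = y u} := by
      simp only [Set.mem_setOf_eq]; exact_mod_cast hc
    have hsub := lat_min x _ hH hx
    have : rep p s = rep p u := rep_eq_of_rel (Or.inl hsub)
    rw [(mem_Rs.mp hs).2, (mem_Rs.mp hu).2] at this
    exact hne this
  · have hH : {y : Fin n → ℝ | y s = -y u} ∈ BCn n := Or.inl ⟨s, u, hne, Or.inr rfl⟩
    have hx : (fun v => ((x.1 v : ℝ))) ∈ {y : Fin n → ℝ | y s = -y u} := by
      simp only [Set.mem_setOf_eq]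
      rw [hc]; push_cast; ring
    have hsub := lat_min x _ hH hx
    have : rep p s = rep p u := rep_eq_of_rel (Or.inr hsub)
    rw [(mem_Rs.mp hs).2, (mem_Rs.mp hu).2] at this
    exact hne this

end BCAux
namespace BCAux
variable {n : ℕ} {p : Set (Fin n → ℝ)}

lemma card_Lat (hp : IsFlat n p) (k : ℕ) :
    Nat.card (Lat p k) = 2 ^ (Rs p).card * Nat.descFactorial k (Rs p).card := by
  classical
  let F : Lat p k → ({t // t ∈ Rs p} → Bool) × ({t // t ∈ Rs p} ↪ Fin k) := fun x =>
    ⟨fun s => decide (0 < x.1 s.1),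
     ⟨fun s => ⟨(x.1 s.1).natAbs - 1, by
        have h1 := lat_ne_zero x (mem_Rs.mp s.2).1
        have h2 := lat_abs_le x s.1
        omega⟩,
      by
        intro s u h
        have h1 := lat_ne_zero x (mem_Rs.mp s.2).1
        have h2 := lat_ne_zero x (mem_Rs.mp u.2).1
        have hv : (x.1 s.1).natAbs - 1 = (x.1 u.1).natAbs - 1 := congrArg Fin.val h
        have hnat : (x.1 s.1).natAbs = (x.1 u.1).natAbs := by omega
        exact Subtype.ext (lat_natAbs_inj x s.2 u.2 hnat)⟩⟩
  have hbij : Function.Bijective F := by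
    constructor
    · intro x y h
      have hfst := congrArg Prod.fst h
      have hsnd := congrArg Prod.snd h
      have key : ∀ s : {t // t ∈ Rs p}, x.1 s.1 = y.1 s.1 := by
        intro s
        have hsig : decide (0 < x.1 s.1) = decide (0 < y.1 s.1) := congrFun hfst s
        have hsig' : (0 < x.1 s.1) ↔ (0 < y.1 s.1) := decide_eq_decide.mp hsig
        have habs : (x.1 s.1).natAbs - 1 = (y.1 s.1).natAbs - 1 := by
          have := congrFun (congrArg (fun (e : {t // t ∈ Rs p} ↪ Fin k) => (e : {t // t ∈ Rs p} → Fin k)) hsnd) s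
          exact congrArg Fin.val this
        have h1 := lat_ne_zero x (mem_Rs.mp s.2).1
        have h2 := lat_ne_zero y (mem_Rs.mp s.2).1
        omega
      apply Subtype.ext
      funext t
      by_cases ht : Tm p t
      · rw [lat_rec hp x t, lat_rec hp y t, key ⟨rep p t, rep_mem_Rs ht⟩]
      · rw [lat_rec hp x t, lat_rec hp y t, sg_zero ht]
        simp
    · rintro ⟨sb, em⟩
      set w' : Fin n → ℤ := fun u =>
        if h : u ∈ Rs p then (if sb ⟨u, h⟩ then 1 else -1) * (((em ⟨u, h⟩ : Fin k) : ℕ) + 1 : ℤ)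
        else 0 with hw'
      set x : Fin n → ℤ := fun t => sg p t * w' (rep p t) with hxdef
      have hwrep : ∀ (t : Fin n) (ht : Tm p t),
          w' (rep p t) = (if sb ⟨rep p t, rep_mem_Rs ht⟩ then 1 else -1) *
            (((em ⟨rep p t, rep_mem_Rs ht⟩ : Fin k) : ℕ) + 1 : ℤ) := by
        intro t ht
        have : ∀ (u : Fin n) (h : u ∈ Rs p), w' u =
            (if sb ⟨u, h⟩ then 1 else -1) * (((em ⟨u, h⟩ : Fin k) : ℕ) + 1 : ℤ) := by
          intro u h
          simp only [hw']
          beta_reduce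
          rw [dif_pos h]
        exact this (rep p t) (rep_mem_Rs ht)
      have habs : ∀ (t : Fin n) (ht : Tm p t),
          (x t).natAbs = ((em ⟨rep p t, rep_mem_Rs ht⟩ : Fin k) : ℕ) + 1 := by
        intro t ht
        have hx : x t = sg p t * w' (rep p t) := rfl
        rw [hwrep t ht] at hx
        rcases sg_cases ht with hs | hs <;> rw [hs] at hx <;>
          split at hx <;> simp at hx <;> omega
      have hzero : ∀ (t : Fin n), ¬ Tm p t → x t = 0 := by
        intro t ht
        show sg p t * w' (rep p t) = 0
        rw [sg_zero ht]; ring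
      have hrec : ∀ t, x t = sg p t * x (rep p t) := by
        intro t
        by_cases ht : Tm p t
        · have : x (rep p t) = w' (rep p t) := by
            show sg p (rep p t) * w' (rep p (rep p t)) = _
            rw [sg_rep ht, rep_rep]; ring
          rw [this]
        · rw [hzero t ht, sg_zero ht]; ring
      have hle : ∀ t, |x t| ≤ (k : ℤ) := by
        intro t
        by_cases ht : Tm p t
        · have h1 := habs t ht
          have h2 : ((em ⟨rep p t, rep_mem_Rs ht⟩ : Fin k) : ℕ) < k :=
            (em ⟨rep p t, rep_mem_Rs ht⟩).isLt
          rw [Int.abs_eq_natAbs, h1]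
          exact_mod_cast h2
        · rw [hzero t ht]; simp
      have hmem : (fun t => ((x t : ℝ))) ∈ p := by
        rw [mem_iff hp]
        intro t
        have := hrec t
        push_cast [this]
        ring
      -- sign consistency claims
      have hrepeq : ∀ (a b : Fin n) (ha : Tm p a) (hb : Tm p b),
          (x a).natAbs = (x b).natAbs → rep p a = rep p b := by
        intro a b ha hb hab
        rw [habs a ha, habs b hb] at hab
        have : em ⟨rep p a, rep_mem_Rs ha⟩ = em ⟨rep p b, rep_mem_Rs hb⟩ :=
          Fin.ext (by omega)
        have := em.injective this
        exact congrArg Subtype.val this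
      have hwne : ∀ (t : Fin n) (ht : Tm p t), w' (rep p t) ≠ 0 := by
        intro t ht
        rw [hwrep t ht]
        split <;> simp <;> omega
      have hxne : ∀ (t : Fin n) (ht : Tm p t), x t ≠ 0 := by
        intro t ht
        have := habs t ht
        omega
      have hmin : ∀ q, IsFlat n q → (fun t => ((x t : ℝ))) ∈ q → p ⊆ q := by
        rw [min_iff]
        intro H hH hxH
        rcases hH with ⟨a, b, hab, hf | hf⟩ | ⟨a, hf⟩
        · subst hf
          simp only [Set.mem_setOf_eq] at hxH
          have hxab : x a = x b := by exact_mod_cast hxH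
          by_cases ha : Tm p a <;> by_cases hb : Tm p b
          · have hr : rep p a = rep p b :=
              hrepeq a b ha hb (by rw [hxab])
            have hsg : sg p a = sg p b := by
              have e1 : x a = sg p a * w' (rep p a) := rfl
              have e2 : x b = sg p b * w' (rep p a) := by rw [hr]
              have := hwne a ha
              rw [e1, e2] at hxab
              exact mul_right_cancel₀ this hxab
            intro y hy
            have ya := subset_constraint a hy
            have yb := subset_constraint b hy
            simp only [Set.mem_setOf_eq] at ya yb ⊢
            rw [ya, yb, hr, hsg]
          · exact absurd hxab (by rw [hzero b hb]; exact hxne a ha)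
          · exact absurd hxab.symm (by rw [hzero a ha]; exact hxne b hb)
          · intro y hy
            have ya := (not_Tm_iff_subset a).mp ha hy
            have yb := (not_Tm_iff_subset b).mp hb hy
            simp only [Set.mem_setOf_eq] at ya yb ⊢
            rw [ya, yb]
        · subst hf
          simp only [Set.mem_setOf_eq] at hxH
          have hxab : x a = -x b := by exact_mod_cast hxH
          by_cases ha : Tm p a <;> by_cases hb : Tm p b
          · have hr : rep p a = rep p b :=
              hrepeq a b ha hb (by rw [hxab]; simp)
            have hsg : sg p a = -sg p b := by
              have e1 : x a = sg p a * w' (rep p a) := rfl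
              have e2 : x b = sg p b * w' (rep p a) := by rw [hr]
              have hne := hwne a ha
              rw [e1, e2] at hxab
              have : sg p a * w' (rep p a) = (-sg p b) * w' (rep p a) := by
                rw [hxab]; ring
              exact mul_right_cancel₀ hne this
            intro y hy
            have ya := subset_constraint a hy
            have yb := subset_constraint b hy
            simp only [Set.mem_setOf_eq] at ya yb ⊢
            rw [ya, yb, hr, hsg]
            push_cast
            ring
          · exact absurd hxab (by rw [hzero b hb]; simpa using hxne a ha)
          · exact absurd (by rw [hzero a ha] at hxab; linarith : x b = 0) (hxne b hb)
          · intro y hy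
            have ya := (not_Tm_iff_subset a).mp ha hy
            have yb := (not_Tm_iff_subset b).mp hb hy
            simp only [Set.mem_setOf_eq] at ya yb ⊢
            rw [ya, yb]; ring
        · subst hf
          simp only [Set.mem_setOf_eq] at hxH
          have hxa : x a = 0 := by exact_mod_cast hxH
          by_cases ha : Tm p a
          · exact absurd hxa (hxne a ha)
          · exact (not_Tm_iff_subset a).mp ha
      refine ⟨⟨x, hle, hmem, hmin⟩, ?_⟩
      have hself : ∀ s : {t // t ∈ Rs p}, x s.1 =
          (if sb s then 1 else -1) * (((em s : Fin k) : ℕ) + 1 : ℤ) := by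
        intro s
        obtain ⟨t, ht⟩ := s
        obtain ⟨ht1, ht2⟩ := mem_Rs.mp ht
        have e0 : x t = sg p t * w' (rep p t) := rfl
        rw [ht2, sg_self ht1 ht2] at e0
        have e1 : w' t = (if sb ⟨t, ht⟩ then 1 else -1) * (((em ⟨t, ht⟩ : Fin k) : ℕ) + 1 : ℤ) := by
          simp only [hw']
          beta_reduce
          rw [dif_pos ht]
        rw [e0, e1]
        ring
      have hpos : ∀ s : {t // t ∈ Rs p}, decide (0 < x s.1) = sb s := by
        intro s
        rw [hself s]
        cases hsb : sb s <;> simp <;> omega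
      apply Prod.ext
      · funext s
        exact hpos s
      · apply DFunLike.ext
        intro s
        apply Fin.ext
        show (x s.1).natAbs - 1 = ((em s : Fin k) : ℕ)
        have := hself s
        split at this <;> omega
  rw [Nat.card_congr (Equiv.ofBijective F hbij), Nat.card_prod,
    Nat.card_eq_fintype_card, Nat.card_eq_fintype_card,
    Fintype.card_fun, Fintype.card_embedding_eq]
  simp [Fintype.card_coe]

end BCAux

theorem card_lattice_points_with_min_flat {n k i : ℕ}
    (A : Set (Set (Fin n → ℝ))) (hA : A ⊆ BCn n) (hfin : A.Finite)
    (p : Set (Fin n → ℝ)) (hp : IsFlat n p)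
    (hdim : Module.finrank ℝ (Submodule.span ℝ p) = i) :
    Nat.card {x : Fin n → ℤ //
        (∀ t, |x t| ≤ (k : ℤ)) ∧
        (fun t => (x t : ℝ)) ∈ p ∧
        ∀ q, IsFlat n q → (fun t => (x t : ℝ)) ∈ q → p ⊆ q} =
      2 ^ i * Nat.descFactorial k i := by
  classical
  have hspan : Submodule.span ℝ p = BCAux.Pmod p := by
    conv_lhs => rw [BCAux.p_eq_Pmod hp]
    exact Submodule.span_eq _
  have hi : (BCAux.Rs p).card = i := by
    rw [← hdim, hspan, BCAux.finrank_eq_card]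
  have hc := BCAux.card_Lat hp k
  rw [hi] at hc
  exact hc
end

section
/- For a signed graph Σ on [n] with no positive loops and no free loops, χ_Σ(k) = Σ_{p ∈ P(Σ)} 2^{n-ρ(p)} (k)_{n-ρ(p)}, where P(Σ) = {p ∈ L(BC_n) : p does not lie above any hyperplane h_e^{ε(e)} for e ∈ E}, ρ is the rank function on L(BC_n), and (k)_i = k(k-1)⋯(k-i+1). -/
open Equiv Finset

/-- A signed edge on vertex type `V`: a full edge (possibly a loop when the
endpoints agree), a half edge, or a free loop. The Bool `s` is the sign,
`true` meaning `+1` and `false` meaning `-1`. -/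
inductive SEdge (V : Type*) where
  | full (i j : V) (s : Bool)
  | half (i : V) (s : Bool)
  | free

/-- A signed graph: an index type of edges together with edge data. -/
structure SGraph (V : Type*) where
  E : Type
  edge : E → SEdge V

/-- Properness of a coloring at a single edge. -/
def properAt {V : Type*} (σ : V → ℤ) : SEdge V → Prop
  | .full i j s => σ i ≠ (if s then σ j else -σ j)
  | .half i _ => σ i ≠ 0
  | .free => False

/-- A proper signed `k`-coloring: values in `[-k,k] ∩ ℤ`, proper at every edge. -/
def Proper {V : Type*} (G : SGraph V) (k : ℕ) (σ : V → ℤ) : Prop :=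
  (∀ i, |σ i| ≤ (k : ℤ)) ∧ ∀ e, properAt σ (G.edge e)

/-- The signed chromatic polynomial evaluated at `k`. -/
noncomputable def chrom {V : Type*} (G : SGraph V) (k : ℕ) : ℕ :=
  Nat.card {σ : V → ℤ // Proper G k σ}

/-- The hyperplane (subset of `ℝⁿ`) attached to a signed edge. -/
def hypOfEdge {n : ℕ} : SEdge (Fin n) → Set (Fin n → ℝ)
  | .full i j s => {x | x i = if s then x j else -x j}
  | .half i _ => {x | x i = 0}
  | .free => Set.univ

/-- The signed graphic arrangement of `G`. -/
def arr {n : ℕ} (G : SGraph (Fin n)) : Set (Set (Fin n → ℝ)) :=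
  {H | ∃ e, H = hypOfEdge (G.edge e)}

/-- The action of a signed permutation `(b, δ)` on signed edges. -/
def actEdge {n : ℕ} (b : Equiv.Perm (Fin n)) (δ : Finset (Fin n)) :
    SEdge (Fin n) → SEdge (Fin n)
  | .full i j s => .full (b i) (b j)
      (xor s (decide (Odd ((({b i, b j} : Finset (Fin n))) ∩ δ).card)))
  | .half i s => .half (b i)
      (xor s (decide (Odd ((({b i} : Finset (Fin n))) ∩ δ).card)))
  | .free => .free

/-- `(b, δ)` is an automorphism of the signed graph `G`: it fixes the edge
multiset of `G`. -/
def IsAut {n : ℕ} (b : Equiv.Perm (Fin n)) (δ : Finset (Fin n)) (G : SGraph (Fin n)) : Prop :=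
  ∃ φ : Equiv.Perm G.E, ∀ e, G.edge (φ e) = actEdge b δ (G.edge e)

/-- The action of a signed permutation on points of `ℝⁿ` (coordinate form). -/
def actR {n : ℕ} (b : Equiv.Perm (Fin n)) (δ : Finset (Fin n)) (x : Fin n → ℝ) : Fin n → ℝ :=
  fun i => (if i ∈ δ then (-1 : ℝ) else 1) * x (b⁻¹ i)

/-- The action of a signed permutation on integer colorings. -/
def actZ {n : ℕ} (b : Equiv.Perm (Fin n)) (δ : Finset (Fin n)) (σ : Fin n → ℤ) : Fin n → ℤ :=
  fun i => (if i ∈ δ then (-1 : ℤ) else 1) * σ (b⁻¹ i)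

/-- The fixed flat `β̂` of the signed permutation `β = (b, δ)`. -/
def flatOf {n : ℕ} (b : Equiv.Perm (Fin n)) (δ : Finset (Fin n)) : Set (Fin n → ℝ) :=
  ⋂ i : Fin n, {x : Fin n → ℝ | x i = (if i ∈ δ then (-1 : ℝ) else 1) * x (b⁻¹ i)}

lemma mem_cyc_self {n : ℕ} (b : Equiv.Perm (Fin n)) (i : Fin n) : i ∈ cyc b i := by
  simp [cyc, Equiv.Perm.SameCycle.refl]

/-- `|C_s ∩ δ|` is even, where `C_s` is the cycle of `i`. -/
def evenCyc {n : ℕ} (b : Equiv.Perm (Fin n)) (δ : Finset (Fin n)) (i : Fin n) : Prop :=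
  Even ((cyc b i ∩ δ).card)

instance {n : ℕ} (b : Equiv.Perm (Fin n)) (δ : Finset (Fin n)) (i : Fin n) :
    Decidable (evenCyc b δ i) := by unfold evenCyc; infer_instance

/-- The minimal element of the cycle of `b` containing `i`. -/
def minCyc {n : ℕ} (b : Equiv.Perm (Fin n)) (i : Fin n) : Fin n :=
  (cyc b i).min' ⟨i, mem_cyc_self b i⟩

lemma sameCycle_minCyc {n : ℕ} (b : Equiv.Perm (Fin n)) (i : Fin n) :
    b.SameCycle (minCyc b i) i := by
  have h : minCyc b i ∈ cyc b i := (cyc b i).min'_mem _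
  simp only [cyc, Finset.mem_filter] at h
  exact h.2.symm

/-- The minimal positive `l` with `b^l(k) = i`, where `k` is the minimal
element of the cycle of `i`. -/
def pathLen {n : ℕ} (b : Equiv.Perm (Fin n)) (i : Fin n) : ℕ :=
  Nat.find (p := fun l => 0 < l ∧ (b ^ l) (minCyc b i) = i)
    (by
      obtain ⟨l, hl, _, h⟩ := Equiv.Perm.SameCycle.exists_pow_eq b (sameCycle_minCyc b i)
      exact ⟨l, hl, h⟩)

/-- `β_(i) = |δ ∩ {b(k), b²(k), …, b^l(k) = i}|`. -/
def betaN {n : ℕ} (b : Equiv.Perm (Fin n)) (δ : Finset (Fin n)) (i : Fin n) : ℕ :=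
  (((Finset.Icc 1 (pathLen b i)).image fun t => (b ^ t) (minCyc b i)) ∩ δ).card

/-- The vertex set of the quotient graph `Σ/β`: cycles of `b` having even
intersection with `δ`. -/
def QV {n : ℕ} (b : Equiv.Perm (Fin n)) (δ : Finset (Fin n)) : Type :=
  {C : Finset (Fin n) // (∃ i, C = cyc b i) ∧ Even ((C ∩ δ).card)}

/-- The quotient vertex attached to `i ∈ [n]` whose cycle meets `δ` evenly. -/
def qv {n : ℕ} (b : Equiv.Perm (Fin n)) (δ : Finset (Fin n)) (i : Fin n)
    (h : evenCyc b δ i) : QV b δ := ⟨cyc b i, ⟨i, rfl⟩, h⟩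

/-- The quotient of a signed edge by a signed permutation. -/
def quotEdge {n : ℕ} (b : Equiv.Perm (Fin n)) (δ : Finset (Fin n)) :
    SEdge (Fin n) → SEdge (QV b δ)
  | .free => .free
  | .half i s => if h : evenCyc b δ i then .half (qv b δ i h) s else .free
  | .full i j s =>
      if _hij : b.SameCycle i j then
        if h : evenCyc b δ i then
          if i = j then .full (qv b δ i h) (qv b δ i h) s
          else .full (qv b δ i h) (qv b δ i h) false
        else .free
      else
        if hi : evenCyc b δ i then
          if hj : evenCyc b δ j then
            .full (qv b δ i hi) (qv b δ j hj)
              (xor s (decide (Odd (betaN b δ i + betaN b δ j))))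
          else .half (qv b δ i hi) false
        else
          if hj : evenCyc b δ j then .half (qv b δ j hj) false else .free

/-- The quotient signed graph `Σ/β`. -/
def quotG {n : ℕ} (G : SGraph (Fin n)) (b : Equiv.Perm (Fin n)) (δ : Finset (Fin n)) :
    SGraph (QV b δ) := ⟨G.E, fun e => quotEdge b δ (G.edge e)⟩

/-- `G` has no positive loops and no free loops. -/
def NoBadLoops {n : ℕ} (G : SGraph (Fin n)) : Prop :=
  ∀ e, (∀ i, G.edge e ≠ .full i i true) ∧ G.edge e ≠ .free

/-- The rank (codimension) of a flat. -/
noncomputable def rk (n : ℕ) (p : Set (Fin n → ℝ)) : ℕ :=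
  n - Module.finrank ℝ (Submodule.span ℝ p)

/-- The complement of the signed graphic arrangement of `G`. -/
def compl {n : ℕ} (G : SGraph (Fin n)) : Set (Fin n → ℝ) :=
  {x | ∀ e, x ∉ hypOfEdge (G.edge e)}

/-- A region of the signed graphic arrangement: a connected component of the
complement. -/
def IsRegion {n : ℕ} (G : SGraph (Fin n)) (r : Set (Fin n → ℝ)) : Prop :=
  ∃ x ∈ compl G, r = connectedComponentIn (compl G) x

/-!
A coloring `σ` lies on exactly those hyperplanes of `BC_n` that contain `minFlat σ`, the least
flat through `σ`; so `σ` is proper iff `minFlat σ` lies on no hyperplane of `Σ`, i.e. belongs to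
`F`, and the colorings are counted fibrewise over `F`. The relations `x i = ± x j` valid on a flat
`p` sort the coordinates into classes; each class not vanishing on `p` has one free representative,
and there are `dim p` of them. A point generic in `p` is determined by its values at the
representatives, which are arbitrary nonzero integers with distinct absolute values: that gives
`2 ^ dim p * (k)_(dim p)` points in `[-k, k]ⁿ`.
-/

namespace BCArrangement

open Function
open scoped Classical

variable {n : ℕ}

section Relations

variable (p : Set (Fin n → ℝ))

def CoordEq (i j : Fin n) : Prop := ∀ x ∈ p, x i = x j

def CoordNeg (i j : Fin n) : Prop := ∀ x ∈ p, x i = -x j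

def Linked (i j : Fin n) : Prop := CoordEq p i j ∨ CoordNeg p i j

variable {p} {i j l : Fin n}

theorem CoordEq.symm (h : CoordEq p i j) : CoordEq p j i := fun x hx => (h x hx).symm

theorem CoordNeg.symm (h : CoordNeg p i j) : CoordNeg p j i := fun x hx => by
  linarith [h x hx]

theorem CoordEq.trans (h : CoordEq p i j) (h' : CoordEq p j l) : CoordEq p i l :=
  fun x hx => (h x hx).trans (h' x hx)

theorem CoordEq.trans_coordNeg (h : CoordEq p i j) (h' : CoordNeg p j l) : CoordNeg p i l :=
  fun x hx => (h x hx).trans (h' x hx)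

theorem CoordNeg.trans_coordEq (h : CoordNeg p i j) (h' : CoordEq p j l) : CoordNeg p i l :=
  fun x hx => by linarith [h x hx, h' x hx]

theorem CoordNeg.trans (h : CoordNeg p i j) (h' : CoordNeg p j l) : CoordEq p i l :=
  fun x hx => by linarith [h x hx, h' x hx]

theorem coordNeg_self_iff : CoordNeg p i i ↔ ∀ x ∈ p, x i = 0 :=
  forall₂_congr fun x _ => by constructor <;> intro h <;> linarith

theorem CoordEq.coordNeg_self_of_coordNeg (h : CoordEq p i j) (h' : CoordNeg p i j) :
    CoordNeg p i i :=
  coordNeg_self_iff.2 fun x hx => by linarith [h x hx, h' x hx]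

theorem CoordEq.linked (h : CoordEq p i j) : Linked p i j := .inl h

theorem CoordNeg.linked (h : CoordNeg p i j) : Linked p i j := .inr h

theorem Linked.refl (p : Set (Fin n → ℝ)) (i : Fin n) : Linked p i i := .inl fun _ _ => rfl

theorem Linked.symm (h : Linked p i j) : Linked p j i := h.imp CoordEq.symm CoordNeg.symm

theorem Linked.trans (h : Linked p i j) (h' : Linked p j l) : Linked p i l := by
  rcases h with h | h <;> rcases h' with h' | h'
  exacts [.inl (h.trans h'), .inr (h.trans_coordNeg h'), .inr (h.trans_coordEq h'),
    .inl (h.trans h')]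

theorem Linked.coordNeg_self_iff (h : Linked p i j) : CoordNeg p i i ↔ CoordNeg p j j := by
  simp only [BCArrangement.coordNeg_self_iff]
  constructor <;> intro h0 x hx <;> rcases h with h | h <;> linarith [h x hx, h0 x hx]

end Relations

section Representatives

variable (p : Set (Fin n → ℝ))

noncomputable def rep (i : Fin n) : Fin n :=
  (univ.filter (Linked p i)).min' ⟨i, by simp [Linked.refl]⟩

noncomputable def reps : Finset (Fin n) := {i | ¬CoordNeg p i i ∧ rep p i = i}

theorem linked_rep (i : Fin n) : Linked p i (rep p i) :=
  (mem_filter.1 (min'_mem _ _)).2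

variable {p} {i j : Fin n}

theorem Linked.rep_eq (h : Linked p i j) : rep p i = rep p j := by
  have : univ.filter (Linked p i) = univ.filter (Linked p j) := by
    ext l; simpa using ⟨h.symm.trans, h.trans⟩
  unfold rep; congr 1

theorem rep_rep : rep p (rep p i) = rep p i := (linked_rep p i).rep_eq.symm

theorem rep_mem_reps_iff : rep p i ∈ reps p ↔ ¬CoordNeg p i i := by
  simp [reps, rep_rep, (linked_rep p i).coordNeg_self_iff]

theorem rep_eq_of_mem_reps {a : Fin n} (ha : a ∈ reps p) : rep p a = a := (mem_filter.1 ha).2.2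

theorem coordEq_iff :
    CoordEq p i j ↔ rep p i = rep p j ∧ (CoordEq p i (rep p i) ↔ CoordEq p j (rep p j)) := by
  refine ⟨fun h => ⟨h.linked.rep_eq, ?_⟩, fun ⟨hr, hs⟩ x hx => ?_⟩
  · rw [h.linked.rep_eq]
    exact ⟨h.symm.trans, h.trans⟩
  · rw [← hr] at hs
    by_cases hi : CoordEq p i (rep p i)
    · rw [hi x hx, hs.1 hi x hx]
    · have hj : CoordNeg p j (rep p i) := hr ▸ (linked_rep p j).resolve_left (hr ▸ mt hs.2 hi)
      rw [(linked_rep p i).resolve_left hi x hx, hj x hx]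

theorem coordNeg_iff :
    CoordNeg p i j ↔
      rep p i = rep p j ∧ (CoordEq p i (rep p i) ↔ CoordNeg p j (rep p j)) := by
  refine ⟨fun h => ⟨h.linked.rep_eq, ?_⟩, fun ⟨hr, hs⟩ x hx => ?_⟩
  · rw [h.linked.rep_eq]
    exact ⟨h.symm.trans_coordEq, h.trans⟩
  · rw [← hr] at hs
    by_cases hi : CoordEq p i (rep p i)
    · rw [hi x hx, hs.1 hi x hx, neg_neg]
    · have hj : CoordEq p j (rep p i) := hr ▸ (linked_rep p j).resolve_right (hr ▸ mt hs.2 hi)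
      rw [(linked_rep p i).resolve_left hi x hx, hj x hx]

theorem coordNeg_rep_iff (hi : ¬CoordNeg p i i) :
    CoordNeg p i (rep p i) ↔ ¬CoordEq p i (rep p i) :=
  ⟨fun hn he => hi (he.coordNeg_self_of_coordNeg hn), (linked_rep p i).resolve_left⟩

end Representatives

section Lift

variable (p : Set (Fin n → ℝ)) {α : Type*} [Ring α]

def Compatible (x : Fin n → α) : Prop :=
  ∀ i j, (CoordEq p i j → x i = x j) ∧ (CoordNeg p i j → x i = -x j)

/-- If `i` vanishes on `p` then `rep p i ∉ reps p`, where `extend` takes the value `0`. -/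
noncomputable def lift (f : reps p → α) (i : Fin n) : α :=
  if CoordEq p i (rep p i) then extend Subtype.val f 0 (rep p i)
  else -extend Subtype.val f 0 (rep p i)

variable {p} {i j : Fin n}

theorem compatible_of_mem {x : Fin n → ℝ} (hx : x ∈ p) : Compatible p x :=
  fun _ _ => ⟨fun h => h x hx, fun h => h x hx⟩

theorem extend_val_rep (f : reps p → α) (hi : ¬CoordNeg p i i) :
    extend Subtype.val f 0 (rep p i) = f ⟨rep p i, rep_mem_reps_iff.2 hi⟩ :=
  Subtype.val_injective.extend_apply f 0 ⟨_, _⟩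

theorem lift_apply_of_coordNeg_self (f : reps p → α) (hi : CoordNeg p i i) : lift p f i = 0 := by
  have : extend Subtype.val f 0 (rep p i) = 0 :=
    extend_apply' _ _ _ fun ⟨a, ha⟩ => rep_mem_reps_iff.1 (ha ▸ a.2) hi
  simp [lift, this]

theorem lift_apply_of_mem_reps (f : reps p → α) (a : reps p) : lift p f a = f a := by
  have hcoord : CoordEq p a (rep p a) := by rw [rep_eq_of_mem_reps a.2]; exact fun _ _ => rfl
  rw [lift, if_pos hcoord, rep_eq_of_mem_reps a.2]
  exact Subtype.val_injective.extend_apply f 0 a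

theorem lift_injective : Injective (lift p (α := α)) := fun f g h =>
  funext fun a => by simpa only [lift_apply_of_mem_reps] using congrFun h a

theorem lift_eq_of_coordEq (f : reps p → α) (h : CoordEq p i j) : lift p f i = lift p f j := by
  obtain ⟨hr, hs⟩ := coordEq_iff.1 h
  unfold lift
  rw [if_congr hs rfl rfl, hr]

theorem lift_eq_neg_of_coordNeg (f : reps p → α) (h : CoordNeg p i j) :
    lift p f i = -lift p f j := by
  by_cases hi : CoordNeg p i i
  · have hj := h.linked.coordNeg_self_iff.1 hi
    rw [lift_apply_of_coordNeg_self f hi, lift_apply_of_coordNeg_self f hj, neg_zero]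
  · obtain ⟨hr, hs⟩ := coordNeg_iff.1 h
    have hj : ¬CoordNeg p j j := mt h.linked.coordNeg_self_iff.2 hi
    unfold lift
    rw [if_congr (hs.trans (coordNeg_rep_iff hj)) rfl rfl, hr]
    split_ifs <;> simp

theorem compatible_lift (f : reps p → α) : Compatible p (lift p f) :=
  fun _ _ => ⟨lift_eq_of_coordEq f, lift_eq_neg_of_coordNeg f⟩

theorem lift_restrict_of_compatible [NoZeroDivisors α] [CharZero α] {x : Fin n → α}
    (hx : Compatible p x) : lift p (fun a => x a) = x := by
  funext i
  by_cases hi : CoordNeg p i i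
  · rw [lift_apply_of_coordNeg_self _ hi, eq_comm, ← CharZero.eq_neg_self_iff]
    exact (hx i i).2 hi
  · rw [lift, extend_val_rep _ hi]
    split_ifs with h
    · exact ((hx i _).1 h).symm
    · exact ((hx i _).2 ((coordNeg_rep_iff hi).2 h)).symm

end Lift

section Flats

variable {p q : Set (Fin n → ℝ)}

theorem _root_.IsFlat.mem_iff_compatible (hp : IsFlat n p) {x : Fin n → ℝ} :
    x ∈ p ↔ Compatible p x := by
  refine ⟨compatible_of_mem, fun hx => ?_⟩
  obtain ⟨S, hS, rfl⟩ := hp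
  refine Set.mem_sInter.2 fun H hH => ?_
  have hsub : ⋂₀ S ⊆ H := Set.sInter_subset_of_mem hH
  rcases hS hH with ⟨i, j, -, rfl | rfl⟩ | ⟨i, rfl⟩
  · exact (hx i j).1 fun y hy => hsub hy
  · exact (hx i j).2 fun y hy => hsub hy
  · have := (hx i i).2 (coordNeg_self_iff.2 fun y hy => hsub hy)
    exact CharZero.eq_neg_self_iff.1 this

theorem _root_.IsFlat.ext (hp : IsFlat n p) (hq : IsFlat n q)
    (hEq : ∀ i j, CoordEq p i j ↔ CoordEq q i j)
    (hNeg : ∀ i j, CoordNeg p i j ↔ CoordNeg q i j) :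
    p = q :=
  Set.ext fun _ => by
    simp only [hp.mem_iff_compatible, hq.mem_iff_compatible, Compatible, hEq, hNeg]

theorem _root_.IsFlat.range_lift (hp : IsFlat n p) : Set.range (lift p (α := ℝ)) = p :=
  Set.Subset.antisymm
    (Set.range_subset_iff.2 fun f => hp.mem_iff_compatible.2 (compatible_lift f))
    fun _ hx => ⟨_, lift_restrict_of_compatible (compatible_of_mem hx)⟩

variable (p) in
noncomputable def liftₗ : (reps p → ℝ) →ₗ[ℝ] Fin n → ℝ where
  toFun := lift p
  map_add' f g := funext fun i => by
    have := congrFun ((ExtendByZero.linearMap ℝ Subtype.val).map_add f g) (rep p i)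
    simp only [ExtendByZero.linearMap_apply, Pi.add_apply] at this
    simp only [lift, this, Pi.add_apply]
    split_ifs <;> ring
  map_smul' c f := funext fun i => by
    have := congrFun ((ExtendByZero.linearMap ℝ Subtype.val).map_smul c f) (rep p i)
    simp only [ExtendByZero.linearMap_apply, Pi.smul_apply, smul_eq_mul] at this
    simp only [lift, this, Pi.smul_apply, smul_eq_mul, RingHom.id_apply]
    split_ifs <;> ring

theorem _root_.IsFlat.finrank_span (hp : IsFlat n p) :
    Module.finrank ℝ (Submodule.span ℝ p) = #(reps p) := by
  have hspan : Submodule.span ℝ p = LinearMap.range (liftₗ p) := by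
    conv_lhs => rw [← hp.range_lift]
    exact Submodule.span_eq (LinearMap.range (liftₗ p))
  rw [hspan, LinearMap.finrank_range_of_inj lift_injective,
    Module.finrank_fintype_fun_eq_card, Fintype.card_coe]

theorem _root_.IsFlat.sub_rk (hp : IsFlat n p) : n - rk n p = #(reps p) := by
  have : #(reps p) ≤ n := (card_le_univ _).trans_eq (Fintype.card_fin n)
  rw [rk, hp.finrank_span]
  omega

end Flats

section IntegerPoints

def minFlat (σ : Fin n → ℤ) : Set (Fin n → ℝ) :=
  ⋂₀ {H ∈ BCn n | (fun i => (σ i : ℝ)) ∈ H}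

/-- `σ` lies on `p` but on no hyperplane of `BC_n` not containing `p`. -/
def IsGenericPoint (p : Set (Fin n → ℝ)) (σ : Fin n → ℤ) : Prop :=
  ∀ i j, (σ i = σ j ↔ CoordEq p i j) ∧ (σ i = -σ j ↔ CoordNeg p i j)

variable {p : Set (Fin n → ℝ)} {σ : Fin n → ℤ} {f : reps p → ℤ} {i j : Fin n}

theorem isFlat_minFlat (σ : Fin n → ℤ) : IsFlat n (minFlat σ) :=
  ⟨_, fun _ hH => hH.1, rfl⟩

theorem cast_mem_minFlat (σ : Fin n → ℤ) : (fun i => (σ i : ℝ)) ∈ minFlat σ :=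
  Set.mem_sInter.2 fun _ hH => hH.2

theorem minFlat_subset {H : Set (Fin n → ℝ)} (hH : H ∈ BCn n)
    (hσ : (fun i => (σ i : ℝ)) ∈ H) : minFlat σ ⊆ H :=
  Set.sInter_subset_of_mem ⟨hH, hσ⟩

theorem coordEq_minFlat_iff : CoordEq (minFlat σ) i j ↔ σ i = σ j := by
  refine ⟨fun h => by exact_mod_cast h _ (cast_mem_minFlat σ), fun h => ?_⟩
  rcases eq_or_ne i j with rfl | hij
  · exact fun _ _ => rfl
  · exact fun x hx => minFlat_subset (.inl ⟨i, j, hij, .inl rfl⟩) (by simp [h]) hx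

theorem coordNeg_minFlat_iff : CoordNeg (minFlat σ) i j ↔ σ i = -σ j := by
  refine ⟨fun h => by exact_mod_cast h _ (cast_mem_minFlat σ), fun h => ?_⟩
  rcases eq_or_ne i j with rfl | hij
  · have : σ i = 0 := by omega
    exact coordNeg_self_iff.2 fun x hx => minFlat_subset (.inr ⟨i, rfl⟩) (by simp [this]) hx
  · exact fun x hx => minFlat_subset (.inl ⟨i, j, hij, .inr rfl⟩) (by simp [h]) hx

theorem minFlat_eq_iff (hp : IsFlat n p) : minFlat σ = p ↔ IsGenericPoint p σ := by
  refine ⟨?_, fun h => (isFlat_minFlat σ).ext hp (fun i j => coordEq_minFlat_iff.trans (h i j).1)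
    (fun i j => coordNeg_minFlat_iff.trans (h i j).2)⟩
  rintro rfl i j
  exact ⟨coordEq_minFlat_iff.symm, coordNeg_minFlat_iff.symm⟩

theorem IsGenericPoint.compatible (h : IsGenericPoint p σ) : Compatible p σ :=
  fun i j => ⟨(h i j).1.2, (h i j).2.2⟩

theorem IsGenericPoint.ne_zero (h : IsGenericPoint p σ) (a : reps p) : σ a ≠ 0 :=
  fun h0 => (mem_filter.1 a.2).2.1 ((h a a).2.1 (by omega))

theorem IsGenericPoint.injective_natAbs (h : IsGenericPoint p σ) :
    Injective fun a : reps p => (σ a).natAbs := by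
  intro a b hab
  have hlink : Linked p a b := (Int.natAbs_eq_natAbs_iff.1 hab).imp (h a b).1.1 (h a b).2.1
  exact Subtype.ext (by rw [← rep_eq_of_mem_reps a.2, ← rep_eq_of_mem_reps b.2, hlink.rep_eq])

theorem extend_val_rep_ne_zero (hf0 : ∀ a, f a ≠ 0) (hi : ¬CoordNeg p i i) :
    extend Subtype.val f 0 (rep p i) ≠ 0 := by
  rw [extend_val_rep f hi]
  exact hf0 _

theorem lift_eq_zero_iff (hf0 : ∀ a, f a ≠ 0) : lift p f i = 0 ↔ CoordNeg p i i := by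
  refine ⟨fun h => by_contra fun hi => extend_val_rep_ne_zero hf0 hi ?_,
    lift_apply_of_coordNeg_self f⟩
  unfold lift at h
  split_ifs at h <;> omega

theorem natAbs_lift (f : reps p → ℤ) (hi : ¬CoordNeg p i i) :
    (lift p f i).natAbs = (f ⟨rep p i, rep_mem_reps_iff.2 hi⟩).natAbs := by
  unfold lift
  rw [extend_val_rep f hi]
  split_ifs <;> simp

theorem rep_eq_of_natAbs_lift_eq (hf : Injective fun a => (f a).natAbs) (hi : ¬CoordNeg p i i)
    (hj : ¬CoordNeg p j j) (h : (lift p f i).natAbs = (lift p f j).natAbs) :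
    rep p i = rep p j := by
  rw [natAbs_lift f hi, natAbs_lift f hj] at h
  exact congrArg Subtype.val (hf h)

theorem coordEq_of_lift_eq (hf0 : ∀ a, f a ≠ 0) (hf : Injective fun a => (f a).natAbs)
    (h : lift p f i = lift p f j) : CoordEq p i j := by
  by_cases hi : CoordNeg p i i
  · have hj : CoordNeg p j j := (lift_eq_zero_iff hf0).1 (h ▸ (lift_eq_zero_iff hf0).2 hi)
    exact fun x hx => by rw [coordNeg_self_iff.1 hi x hx, coordNeg_self_iff.1 hj x hx]
  · have hj : ¬CoordNeg p j j := by
      rw [← lift_eq_zero_iff hf0, ← h]; rwa [lift_eq_zero_iff hf0]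
    have hr := rep_eq_of_natAbs_lift_eq hf hi hj (by rw [h])
    have hne := extend_val_rep_ne_zero hf0 hj
    refine coordEq_iff.2 ⟨hr, ?_⟩
    unfold lift at h
    rw [hr] at h ⊢
    split_ifs at h <;> first | tauto | omega

theorem coordNeg_of_lift_eq_neg (hf0 : ∀ a, f a ≠ 0) (hf : Injective fun a => (f a).natAbs)
    (h : lift p f i = -lift p f j) : CoordNeg p i j := by
  by_cases hi : CoordNeg p i i
  · have hj : CoordNeg p j j := by
      rw [← lift_eq_zero_iff hf0, ← neg_eq_zero, ← h]; exact (lift_eq_zero_iff hf0).2 hi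
    exact fun x hx => by rw [coordNeg_self_iff.1 hi x hx, coordNeg_self_iff.1 hj x hx, neg_zero]
  · have hj : ¬CoordNeg p j j := by
      rw [← lift_eq_zero_iff hf0, ← neg_eq_zero, ← h]; rwa [lift_eq_zero_iff hf0]
    have hr := rep_eq_of_natAbs_lift_eq hf hi hj (by rw [h, Int.natAbs_neg])
    have hne := extend_val_rep_ne_zero hf0 hj
    refine coordNeg_iff.2 ⟨hr, ?_⟩
    rw [coordNeg_rep_iff hj]
    unfold lift at h
    rw [hr] at h ⊢
    split_ifs at h <;> first | tauto | omega

theorem isGenericPoint_lift (hf0 : ∀ a, f a ≠ 0) (hf : Injective fun a => (f a).natAbs) :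
    IsGenericPoint p (lift p f) := fun _ _ =>
  ⟨⟨coordEq_of_lift_eq hf0 hf, lift_eq_of_coordEq f⟩,
    ⟨coordNeg_of_lift_eq_neg hf0 hf, lift_eq_neg_of_coordNeg f⟩⟩

end IntegerPoints

section Counting

noncomputable def box (ι : Type*) [Fintype ι] [DecidableEq ι] (k : ℕ) : Finset (ι → ℤ) :=
  Fintype.piFinset fun _ => Icc (-(k : ℤ)) k

variable {ι : Type*} [Fintype ι] [DecidableEq ι] {k : ℕ}

theorem mem_box {f : ι → ℤ} : f ∈ box ι k ↔ ∀ i, |f i| ≤ k := by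
  simp [box, abs_le]

theorem card_box_filter_natAbs_injective (ι : Type*) [Fintype ι] [DecidableEq ι] (k : ℕ) :
    #{f ∈ box ι k | (∀ a, f a ≠ 0) ∧ Injective fun a => (f a).natAbs} =
      2 ^ Fintype.card ι * k.descFactorial (Fintype.card ι) := by
  -- such an `f` is an embedding `|f| - 1 : ι ↪ Fin k` together with a choice of signs
  set T : (ι ↪ Fin k) → Finset (ι → ℤ) := fun e =>
    Fintype.piFinset fun a => {((e a : ℕ) + 1 : ℤ), -((e a : ℕ) + 1 : ℤ)}
  have hT : {f ∈ box ι k | (∀ a, f a ≠ 0) ∧ Injective fun a => (f a).natAbs} =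
      univ.biUnion T := by
    ext f
    simp only [mem_filter, mem_box, abs_le, mem_biUnion, mem_univ, true_and, T,
      Fintype.mem_piFinset, mem_insert, mem_singleton]
    constructor
    · rintro ⟨hbox, hne, hinj⟩
      refine ⟨⟨fun a => ⟨(f a).natAbs - 1, by have := hbox a; have := hne a; omega⟩,
        fun a b hab => hinj ?_⟩, fun a => ?_⟩
      · have := hne a; have := hne b; simp only [Fin.mk.injEq] at hab ⊢; omega
      · have := hne a
        show f a = (((f a).natAbs - 1 : ℕ) : ℤ) + 1 ∨
          f a = -((((f a).natAbs - 1 : ℕ) : ℤ) + 1)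
        omega
    · rintro ⟨e, he⟩
      refine ⟨fun a => ?_, fun a => ?_, fun a b hab => e.injective (Fin.ext ?_)⟩
      · have := (e a).isLt; have := he a; omega
      · have := he a; omega
      · have := he a; have := he b; simp only at hab; omega
  have hdisj : Set.PairwiseDisjoint ↑(univ : Finset (ι ↪ Fin k)) T := by
    intro e _ e' _ hne
    refine disjoint_left.2 fun f hf hf' => hne (DFunLike.ext _ _ fun a => Fin.ext ?_)
    simp only [T, Fintype.mem_piFinset, mem_insert, mem_singleton] at hf hf'
    have := hf a; have := hf' a; omega
  have hcard : ∀ e, #(T e) = 2 ^ Fintype.card ι := fun e => by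
    simp only [T, Fintype.card_piFinset]
    rw [prod_congr rfl fun a _ => card_pair (by omega), prod_const, card_univ]
  rw [hT, card_biUnion hdisj, sum_congr rfl fun e _ => hcard e, sum_const, card_univ,
    Fintype.card_embedding_eq, Fintype.card_fin, smul_eq_mul, mul_comm]

variable {n : ℕ} {p : Set (Fin n → ℝ)}

theorem lift_mem_box {f : reps p → ℤ} (hf : f ∈ box (reps p) k) :
    lift p f ∈ box (Fin n) k := by
  rw [mem_box] at hf ⊢
  intro i
  by_cases hi : CoordNeg p i i
  · simp [lift_apply_of_coordNeg_self f hi]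
  · unfold lift
    rw [extend_val_rep f hi]
    split_ifs <;> simp [hf]

theorem card_box_filter_isGenericPoint (p : Set (Fin n → ℝ)) (k : ℕ) :
    #{σ ∈ box (Fin n) k | IsGenericPoint p σ} =
      #{f ∈ box (reps p) k | (∀ a, f a ≠ 0) ∧ Injective fun a => (f a).natAbs} := by
  refine card_nbij' (fun σ a => σ a) (lift p) ?_ ?_ ?_ ?_
  · intro σ hσ
    simp only [coe_filter, Set.mem_ofPred_eq, mem_box] at hσ ⊢
    exact ⟨fun a => hσ.1 a, hσ.2.ne_zero, hσ.2.injective_natAbs⟩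
  · intro f hf
    simp only [coe_filter, Set.mem_ofPred_eq] at hf ⊢
    exact ⟨lift_mem_box hf.1, isGenericPoint_lift hf.2.1 hf.2.2⟩
  · intro σ hσ
    exact lift_restrict_of_compatible (mem_filter.1 hσ).2.compatible
  · intro f _
    exact funext (lift_apply_of_mem_reps f)

theorem card_box_filter_minFlat_eq (hp : IsFlat n p) (k : ℕ) :
    #{σ ∈ box (Fin n) k | minFlat σ = p} =
      2 ^ (n - rk n p) * k.descFactorial (n - rk n p) := by
  rw [filter_congr fun σ _ => minFlat_eq_iff hp, card_box_filter_isGenericPoint,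
    card_box_filter_natAbs_injective, Fintype.card_coe, hp.sub_rk]

end Counting

section Colorings

variable {n : ℕ} {σ : Fin n → ℤ}

theorem properAt_iff_cast_not_mem (e : SEdge (Fin n)) :
    properAt σ e ↔ (fun i => (σ i : ℝ)) ∉ hypOfEdge e := by
  cases e with
  | full i j s => cases s <;> simp [properAt, hypOfEdge, ← Int.cast_neg]
  | half i s => simp [properAt, hypOfEdge]
  | free => simp [properAt, hypOfEdge]

theorem cast_mem_hypOfEdge_iff (e : SEdge (Fin n)) :
    (fun i => (σ i : ℝ)) ∈ hypOfEdge e ↔ minFlat σ ⊆ hypOfEdge e := by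
  refine ⟨fun h => ?_, fun h => h (cast_mem_minFlat σ)⟩
  cases e with
  | full i j s =>
    cases s
    · have h' : (σ i : ℝ) = -(σ j : ℝ) := h
      exact coordNeg_minFlat_iff.2 (by exact_mod_cast h')
    · have h' : (σ i : ℝ) = σ j := h
      exact coordEq_minFlat_iff.2 (by exact_mod_cast h')
  | half i s =>
    have h' : (σ i : ℝ) = 0 := h
    have hσ : σ i = 0 := by exact_mod_cast h'
    exact coordNeg_self_iff.1 (coordNeg_minFlat_iff.2 (by omega))
  | free => exact Set.subset_univ _

theorem chrom_eq_card_box_filter {V : Type*} [Fintype V] [DecidableEq V] (G : SGraph V) (k : ℕ) :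
    chrom G k = #{σ ∈ box V k | ∀ e, properAt σ (G.edge e)} := by
  rw [chrom, ← Nat.card_eq_finsetCard]
  exact Nat.card_congr (Equiv.subtypeEquivRight fun σ => by simp [Proper, mem_box])

end Colorings

end BCArrangement

open BCArrangement

theorem chrom_eq_sum_over_ideal_general {n k : ℕ} (G : SGraph (Fin n))
    (F : Finset (Set (Fin n → ℝ)))
    (hF : ∀ p, p ∈ F ↔ (IsFlat n p ∧ ∀ e, ¬ p ⊆ hypOfEdge (G.edge e))) :
    chrom G k = ∑ p ∈ F, 2 ^ (n - rk n p) * Nat.descFactorial k (n - rk n p) := by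
  classical
  have hproper (σ : Fin n → ℤ) : (∀ e, properAt σ (G.edge e)) ↔ minFlat σ ∈ F := by
    simp only [hF, isFlat_minFlat, true_and, properAt_iff_cast_not_mem, cast_mem_hypOfEdge_iff]
  rw [chrom_eq_card_box_filter, filter_congr fun σ _ => hproper σ,
    ← sum_card_fiberwise_eq_card_filter]
  exact sum_congr rfl fun p hp => card_box_filter_minFlat_eq ((hF p).1 hp).1 k

theorem chrom_eq_sum_over_ideal {n k : ℕ} (G : SGraph (Fin n))
    (hG : NoBadLoops G)
    (F : Finset (Set (Fin n → ℝ)))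
    (hF : ∀ p, p ∈ F ↔ (IsFlat n p ∧ ∀ e, ¬ p ⊆ hypOfEdge (G.edge e))) :
    chrom G k = ∑ p ∈ F, 2 ^ (n - rk n p) * Nat.descFactorial k (n - rk n p) :=
  chrom_eq_sum_over_ideal_general G F hF
end

section
/- For a signed graph Σ on [n] with no positive loops and no free loops, χ_Σ(k) = Σ_{i=0}^{n} W_{n-i} · 2^i · (k)_i, where W_j is the number of elements of rank j in the poset P(Σ) and (k)_i = k(k-1)⋯(k-i+1). -/
open Equiv Finset

/-
A coloring `σ` is proper iff the smallest `BC_n`-flat `minFlat σ` through the point `σ ∈ ℤⁿ ⊆ ℝⁿ`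
lies in no hyperplane of `B_Σ`, i.e. belongs to `P(Σ)`; so `χ_Σ(k)` counts the colorings in
`[-k, k]ⁿ` according to their minimal flat. A flat `p` is cut out by the coordinates vanishing on
it and the pairs of coordinates it forces to be equal or opposite. The non-vanishing coordinates
fall into `dim p` classes, and `minFlat σ = p` exactly when `σ` vanishes on the vanishing
coordinates and is determined on each class, up to the forced signs, by one nonzero value, the
values of different classes having distinct absolute values. There are `2 ^ d * (k)_d` such
colorings, `d = dim p = n - rk p`; grouping the flats by rank gives the formula.
-/

theorem Finset.sum_comp_eq_sum_range_card_filter {β : Type*} (s : Finset β) (d : β → ℕ)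
    (g : ℕ → ℕ) {N : ℕ} (hd : ∀ b ∈ s, d b ≤ N) :
    ∑ b ∈ s, g (d b) = ∑ i ∈ range (N + 1), #{b ∈ s | d b = i} * g i := by
  rw [← sum_fiberwise_of_maps_to fun b hb => mem_range.2 (Nat.lt_succ_of_le (hd b hb))]
  refine sum_congr rfl fun i _ => ?_
  rw [sum_congr rfl fun b hb => by rw [(mem_filter.1 hb).2], sum_const, smul_eq_mul]

namespace BCFlat

section Count

variable {ι : Type*} [Fintype ι]

open scoped Classical in
noncomputable def box (ι : Type*) [Fintype ι] (k : ℕ) : Finset (ι → ℤ) :=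
  Fintype.piFinset fun _ => Icc (-(k : ℤ)) k

theorem mem_box {k : ℕ} {σ : ι → ℤ} : σ ∈ box ι k ↔ ∀ i, |σ i| ≤ k := by
  simp [box, abs_le]

def signedSucc (s : Bool) (m : ℕ) : ℤ := if s then m + 1 else -(m + 1)

theorem natAbs_signedSucc (s : Bool) (m : ℕ) : (signedSucc s m).natAbs = m + 1 := by
  cases s <;> simp [signedSucc] <;> omega

theorem decide_pos_signedSucc (s : Bool) (m : ℕ) : decide (0 < signedSucc s m) = s := by
  cases s <;> simp [signedSucc]

theorem signedSucc_decide_pos {z : ℤ} (hz : z ≠ 0) :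
    signedSucc (decide (0 < z)) (z.natAbs - 1) = z := by
  rcases hz.lt_or_gt with h | h <;> simp [signedSucc, h, not_lt.2 h.le] <;> omega

open scoped Classical in
/-- Such an `f` is `fun a => signedSucc (s a) (v a)` for unique `s : α → Bool`, `v : α ↪ Fin k`. -/
theorem card_filter_natAbs_injective (α : Type*) [Fintype α] (k : ℕ) :
    #{f ∈ box α k | (∀ a, f a ≠ 0) ∧ Function.Injective fun a => (f a).natAbs} =
      2 ^ Fintype.card α * k.descFactorial (Fintype.card α) := by
  have hlt : ∀ f ∈ box α k, ∀ a, f a ≠ 0 → (f a).natAbs - 1 < k := fun f hf a ha => by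
    have := abs_le.1 (mem_box.1 hf a); omega
  calc _ = #(univ : Finset ((α → Bool) × (α ↪ Fin k))) := by
        refine card_bij'
          (fun f hf => (fun a => decide (0 < f a),
            ⟨fun a => ⟨(f a).natAbs - 1, hlt f (mem_filter.1 hf).1 a ((mem_filter.1 hf).2.1 a)⟩,
              fun a b hab => (mem_filter.1 hf).2.2 ?_⟩))
          (fun g _ a => signedSucc (g.1 a) (g.2 a))
          (fun _ _ => mem_univ _) (fun g _ => ?_) (fun f hf => ?_) (fun g _ => ?_)
        · have ha := (mem_filter.1 hf).2.1 a
          have hb := (mem_filter.1 hf).2.1 b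
          have hval := congrArg Fin.val hab
          simp only at hval ⊢
          omega
        · refine mem_filter.2 ⟨mem_box.2 fun a => ?_, fun a => ?_, fun a b hab => ?_⟩
          · rw [Int.abs_eq_natAbs, natAbs_signedSucc]
            exact_mod_cast (g.2 a).2
          · rw [← Int.natAbs_ne_zero, natAbs_signedSucc]
            omega
          · simp only [natAbs_signedSucc, add_left_inj] at hab
            exact g.2.injective (Fin.ext hab)
        · exact funext fun a => signedSucc_decide_pos ((mem_filter.1 hf).2.1 a)
        · refine Prod.ext (funext fun a => decide_pos_signedSucc _ _)
            (Function.Embedding.ext fun a => Fin.ext ?_)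
          simp [natAbs_signedSucc]
    _ = _ := by simp [Fintype.card_embedding_eq]

end Count

section Coordinates

variable {ι : Type*} {p : Set (ι → ℝ)} {i j l : ι}

def CoordZero (p : Set (ι → ℝ)) (i : ι) : Prop := ∀ y ∈ p, y i = 0

def CoordEq (p : Set (ι → ℝ)) (i j : ι) : Prop := ∀ y ∈ p, y i = y j

def CoordNeg (p : Set (ι → ℝ)) (i j : ι) : Prop := ∀ y ∈ p, y i = -y j

theorem coordZero_iff_subset : CoordZero p i ↔ p ⊆ {y | y i = 0} := Iff.rfl

theorem coordEq_iff_subset : CoordEq p i j ↔ p ⊆ {y | y i = y j} := Iff.rfl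

theorem coordNeg_iff_subset : CoordNeg p i j ↔ p ⊆ {y | y i = -y j} := Iff.rfl

theorem CoordEq.refl (p : Set (ι → ℝ)) (i : ι) : CoordEq p i i := fun _ _ => rfl

theorem CoordEq.symm (h : CoordEq p i j) : CoordEq p j i := fun y hy => (h y hy).symm

theorem CoordEq.trans (h₁ : CoordEq p i j) (h₂ : CoordEq p j l) : CoordEq p i l :=
  fun y hy => (h₁ y hy).trans (h₂ y hy)

theorem CoordEq.trans_coordNeg (h₁ : CoordEq p i j) (h₂ : CoordNeg p j l) : CoordNeg p i l :=
  fun y hy => (h₁ y hy).trans (h₂ y hy)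

theorem CoordNeg.symm (h : CoordNeg p i j) : CoordNeg p j i :=
  fun y hy => by linarith [h y hy]

theorem CoordNeg.trans_coordEq (h₁ : CoordNeg p i j) (h₂ : CoordEq p j l) : CoordNeg p i l :=
  fun y hy => by rw [h₁ y hy, h₂ y hy]

theorem CoordNeg.trans (h₁ : CoordNeg p i j) (h₂ : CoordNeg p j l) : CoordEq p i l :=
  fun y hy => by rw [h₁ y hy, h₂ y hy, neg_neg]

theorem CoordEq.coordZero_right (he : CoordEq p i j) (hn : CoordNeg p i j) : CoordZero p j :=
  fun y hy => by linarith [he y hy, hn y hy]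

theorem CoordZero.coordEq (hi : CoordZero p i) (hj : CoordZero p j) : CoordEq p i j :=
  fun y hy => by rw [hi y hy, hj y hy]

theorem CoordZero.coordNeg (hi : CoordZero p i) (hj : CoordZero p j) : CoordNeg p i j :=
  fun y hy => by rw [hi y hy, hj y hy, neg_zero]

theorem coordNeg_self_iff : CoordNeg p i i ↔ CoordZero p i :=
  ⟨fun h y hy => by linarith [h y hy], fun h => h.coordNeg h⟩

/-- For a flat `p`, the classes on which `p` does not vanish are its free coordinates. -/
def coordSetoid (p : Set (ι → ℝ)) : Setoid ι where
  r i j := CoordEq p i j ∨ CoordNeg p i j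
  iseqv :=
    { refl := fun i => .inl (.refl p i)
      symm := fun h => h.imp CoordEq.symm CoordNeg.symm
      trans := by
        rintro i j l (h₁ | h₁) (h₂ | h₂)
        exacts [.inl (h₁.trans h₂), .inr (h₁.trans_coordNeg h₂), .inr (h₁.trans_coordEq h₂),
          .inl (h₁.trans h₂)] }

theorem coordZero_iff_of_rel (h : coordSetoid p i j) : CoordZero p i ↔ CoordZero p j := by
  rcases h with h | h
  · exact ⟨fun hi y hy => by rw [← h y hy, hi y hy], fun hj y hy => by rw [h y hy, hj y hy]⟩
  · exact ⟨fun hi y hy => by linarith [h y hy, hi y hy],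
      fun hj y hy => by rw [h y hy, hj y hy, neg_zero]⟩

noncomputable def rep (p : Set (ι → ℝ)) (i : ι) : ι := (Quotient.mk (coordSetoid p) i).out

theorem rep_rel (p : Set (ι → ℝ)) (i : ι) : coordSetoid p (rep p i) i := Quotient.mk_out i

theorem rep_eq_of_rel (h : coordSetoid p i j) : rep p i = rep p j :=
  congrArg Quotient.out (Quotient.sound h)

theorem rep_rep (p : Set (ι → ℝ)) (i : ι) : rep p (rep p i) = rep p i :=
  rep_eq_of_rel (rep_rel p i)

theorem coordZero_rep_iff : CoordZero p (rep p i) ↔ CoordZero p i :=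
  coordZero_iff_of_rel (rep_rel p i)

open scoped Classical in
noncomputable def sgn (p : Set (ι → ℝ)) (i : ι) : ℤ := if CoordEq p (rep p i) i then 1 else -1

theorem sgn_eq_one_or_neg_one (p : Set (ι → ℝ)) (i : ι) : sgn p i = 1 ∨ sgn p i = -1 := by
  unfold sgn; split_ifs <;> simp

theorem sgn_of_rep_eq (h : rep p i = i) : sgn p i = 1 := by
  rw [sgn, h, if_pos (CoordEq.refl p i)]

theorem natAbs_sgn (p : Set (ι → ℝ)) (i : ι) : (sgn p i).natAbs = 1 := by
  rcases sgn_eq_one_or_neg_one p i with h | h <;> rw [h] <;> rfl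

theorem sgn_eq_or_eq_neg (p : Set (ι → ℝ)) (i j : ι) :
    sgn p i = sgn p j ∨ sgn p i = -sgn p j := by
  rcases sgn_eq_one_or_neg_one p i with h | h <;> rcases sgn_eq_one_or_neg_one p j with h' | h' <;>
    simp [h, h']

structure Respects {R : Type*} [Ring R] (p : Set (ι → ℝ)) (g : ι → R) : Prop where
  zero : ∀ i, CoordZero p i → g i = 0
  eq : ∀ i j, CoordEq p i j → g i = g j
  neg : ∀ i j, CoordNeg p i j → g i = -g j

theorem respects_of_mem {y : ι → ℝ} (hy : y ∈ p) : Respects p y :=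
  ⟨fun _ h => h y hy, fun _ _ h => h y hy, fun _ _ h => h y hy⟩

theorem Respects.apply_eq_sgn_mul {R : Type*} [Ring R] {g : ι → R} (hg : Respects p g) (i : ι) :
    g i = sgn p i * g (rep p i) := by
  unfold sgn
  split_ifs with h
  · rw [hg.eq _ _ h, Int.cast_one, one_mul]
  · have hn : CoordNeg p (rep p i) i := (rep_rel p i).resolve_left h
    rw [hg.neg _ _ hn, Int.cast_neg, Int.cast_one, neg_one_mul, neg_neg]

theorem coordEq_of_sgn (hr : rep p i = rep p j) (hs : sgn p i = sgn p j) : CoordEq p i j :=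
  fun y hy => by
    rw [(respects_of_mem hy).apply_eq_sgn_mul i, (respects_of_mem hy).apply_eq_sgn_mul j, hr, hs]

theorem coordNeg_of_sgn (hr : rep p i = rep p j) (hs : sgn p i = -sgn p j) : CoordNeg p i j :=
  fun y hy => by
    rw [(respects_of_mem hy).apply_eq_sgn_mul i, (respects_of_mem hy).apply_eq_sgn_mul j, hr, hs]
    push_cast; ring

theorem CoordEq.sgn_eq (h : CoordEq p i j) (hj : ¬ CoordZero p j) : sgn p i = sgn p j := by
  refine (sgn_eq_or_eq_neg p i j).resolve_right fun hs => hj (h.coordZero_right ?_)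
  exact coordNeg_of_sgn (rep_eq_of_rel (.inl h)) hs

theorem CoordNeg.sgn_eq_neg (h : CoordNeg p i j) (hj : ¬ CoordZero p j) :
    sgn p i = -sgn p j := by
  refine (sgn_eq_or_eq_neg p i j).resolve_left fun hs => hj (CoordEq.coordZero_right ?_ h)
  exact coordEq_of_sgn (rep_eq_of_rel (.inr h)) hs

/-- For a flat `p`: `p` is the smallest flat containing `σ` (`minFlat_eq_iff_hasPattern`). -/
structure HasPattern (p : Set (ι → ℝ)) (σ : ι → ℤ) : Prop where
  eq_zero_iff : ∀ i, σ i = 0 ↔ CoordZero p i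
  eq_iff : ∀ i j, σ i = σ j ↔ CoordEq p i j
  eq_neg_iff : ∀ i j, σ i = -σ j ↔ CoordNeg p i j

theorem HasPattern.respects {σ : ι → ℤ} (h : HasPattern p σ) : Respects p σ :=
  ⟨fun i => (h.eq_zero_iff i).2, fun i j => (h.eq_iff i j).2, fun i j => (h.eq_neg_iff i j).2⟩

variable [Fintype ι]

open scoped Classical in
noncomputable def reps (p : Set (ι → ℝ)) : Finset ι := {i | ¬ CoordZero p i ∧ rep p i = i}

theorem mem_reps : i ∈ reps p ↔ ¬ CoordZero p i ∧ rep p i = i := by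
  classical simp [reps]

theorem rep_coe (r : reps p) : rep p r = r := (mem_reps.1 r.2).2

theorem rep_mem_reps_iff : rep p i ∈ reps p ↔ ¬ CoordZero p i := by
  rw [mem_reps, rep_rep, coordZero_rep_iff, and_iff_left rfl]

theorem card_reps_le (p : Set (ι → ℝ)) : #(reps p) ≤ Fintype.card ι := card_le_univ _

section Lift

variable {R : Type*} [Ring R]

open scoped Classical in
noncomputable def lift (p : Set (ι → ℝ)) (f : reps p → R) (i : ι) : R :=
  if h : rep p i ∈ reps p then sgn p i * f ⟨rep p i, h⟩ else 0

theorem lift_of_coordZero (f : reps p → R) (h : CoordZero p i) : lift p f i = 0 :=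
  dif_neg (rep_mem_reps_iff.not_left.2 h)

theorem lift_of_not_coordZero (f : reps p → R) (h : ¬ CoordZero p i) :
    lift p f i = sgn p i * f ⟨rep p i, rep_mem_reps_iff.2 h⟩ :=
  dif_pos _

theorem lift_coe (f : reps p → R) (r : reps p) : lift p f r = f r := by
  obtain ⟨hr, hrep⟩ := mem_reps.1 r.2
  rw [lift_of_not_coordZero f hr, sgn_of_rep_eq hrep, Int.cast_one, one_mul]
  exact congrArg f (Subtype.ext hrep)

theorem lift_eq_sgn_mul_lift_rep (f : reps p → R) (i : ι) :
    lift p f i = sgn p i * lift p f (rep p i) := by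
  by_cases h : rep p i ∈ reps p
  · rw [lift, dif_pos h, ← lift_coe f ⟨_, h⟩]
  · have hz : CoordZero p i := not_not.1 (rep_mem_reps_iff.not.1 h)
    rw [lift_of_coordZero f hz, lift_of_coordZero f (coordZero_rep_iff.2 hz), mul_zero]

theorem respects_lift (f : reps p → R) : Respects p (lift p f) := by
  refine ⟨fun i => lift_of_coordZero f, fun i j h => ?_, fun i j h => ?_⟩
  · by_cases hj : CoordZero p j
    · rw [lift_of_coordZero f hj, lift_of_coordZero f ((coordZero_iff_of_rel (.inl h)).2 hj)]
    · rw [lift_eq_sgn_mul_lift_rep f i, lift_eq_sgn_mul_lift_rep f j, rep_eq_of_rel (.inl h),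
        h.sgn_eq hj]
  · by_cases hj : CoordZero p j
    · rw [lift_of_coordZero f hj, lift_of_coordZero f ((coordZero_iff_of_rel (.inr h)).2 hj),
        neg_zero]
    · rw [lift_eq_sgn_mul_lift_rep f i, lift_eq_sgn_mul_lift_rep f j, rep_eq_of_rel (.inr h),
        h.sgn_eq_neg hj, Int.cast_neg, neg_mul]

theorem lift_restrict {g : ι → R} (hg : Respects p g) : lift p (fun r => g r) = g := by
  funext i
  by_cases h : CoordZero p i
  · rw [lift_of_coordZero _ h, hg.zero i h]
  · rw [lift_of_not_coordZero _ h, hg.apply_eq_sgn_mul i]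

theorem lift_injective : Function.Injective (lift (R := R) p) := fun f f' h =>
  funext fun r => by rw [← lift_coe f r, ← lift_coe f' r, h]

end Lift

noncomputable def liftₗ (p : Set (ι → ℝ)) : (reps p → ℝ) →ₗ[ℝ] ι → ℝ where
  toFun := lift p
  map_add' f f' := by
    funext i
    by_cases h : CoordZero p i
    · simp [lift_of_coordZero _ h]
    · simp [lift_of_not_coordZero _ h, mul_add]
  map_smul' c f := by
    funext i
    by_cases h : CoordZero p i
    · simp [lift_of_coordZero _ h]
    · simp [lift_of_not_coordZero _ h, mul_left_comm]

theorem natAbs_lift (f : reps p → ℤ) (h : ¬ CoordZero p i) :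
    (lift p f i).natAbs = (f ⟨rep p i, rep_mem_reps_iff.2 h⟩).natAbs := by
  rw [lift_of_not_coordZero f h, Int.cast_id, Int.natAbs_mul, natAbs_sgn, one_mul]

theorem lift_eq_zero_iff {f : reps p → ℤ} (hf : ∀ r, f r ≠ 0) :
    lift p f i = 0 ↔ CoordZero p i := by
  refine ⟨fun h => by_contra fun hi => hf ⟨rep p i, rep_mem_reps_iff.2 hi⟩ ?_,
    lift_of_coordZero f⟩
  rw [← Int.natAbs_eq_zero, ← natAbs_lift f hi, h, Int.natAbs_zero]

theorem hasPattern_lift {f : reps p → ℤ} (hf₀ : ∀ r, f r ≠ 0)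
    (hf : Function.Injective fun r => (f r).natAbs) : HasPattern p (lift p f) := by
  have same_class : ∀ {i j}, ¬ CoordZero p j → (lift p f i).natAbs = (lift p f j).natAbs →
      rep p i = rep p j ∧ lift p f (rep p j) ≠ 0 := fun {i j} hj h => by
    have hi : ¬ CoordZero p i := fun hi => hj <| (lift_eq_zero_iff hf₀).1 <|
      Int.natAbs_eq_zero.1 <| by rw [← h, lift_of_coordZero f hi, Int.natAbs_zero]
    rw [natAbs_lift f hi, natAbs_lift f hj] at h
    exact ⟨congrArg Subtype.val (hf h),
      (lift_eq_zero_iff hf₀).not.2 (coordZero_rep_iff.not.2 hj)⟩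
  refine ⟨fun i => lift_eq_zero_iff hf₀, fun i j => ⟨fun h => ?_, (respects_lift f).eq i j⟩,
    fun i j => ⟨fun h => ?_, (respects_lift f).neg i j⟩⟩
  · by_cases hj : CoordZero p j
    · exact ((lift_eq_zero_iff hf₀).1 (h.trans (lift_of_coordZero f hj))).coordEq hj
    obtain ⟨hr, hne⟩ := same_class hj (by rw [h])
    rw [lift_eq_sgn_mul_lift_rep f i, lift_eq_sgn_mul_lift_rep f j, hr] at h
    exact coordEq_of_sgn hr (mul_right_cancel₀ hne h)
  · by_cases hj : CoordZero p j
    · exact ((lift_eq_zero_iff hf₀).1 (by rw [h, lift_of_coordZero f hj, neg_zero])).coordNeg hj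
    obtain ⟨hr, hne⟩ := same_class hj (by rw [h, Int.natAbs_neg])
    rw [lift_eq_sgn_mul_lift_rep f i, lift_eq_sgn_mul_lift_rep f j, hr, ← neg_mul] at h
    exact coordNeg_of_sgn hr (mul_right_cancel₀ hne h)

open scoped Classical in
/-- Restriction to `reps p` is a bijection, with inverse `lift p`. -/
theorem card_filter_hasPattern (p : Set (ι → ℝ)) (k : ℕ) :
    #{σ ∈ box ι k | HasPattern p σ} = 2 ^ #(reps p) * k.descFactorial #(reps p) := by
  rw [← Fintype.card_coe (reps p), ← card_filter_natAbs_injective]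
  refine card_nbij' (fun σ r => σ r) (lift p) (fun σ hσ => ?_) (fun f hf => ?_)
    (fun σ hσ => lift_restrict (mem_filter.1 hσ).2.respects) (fun f _ => funext (lift_coe f))
  · obtain ⟨hb, hσ⟩ := mem_filter.1 hσ
    refine mem_filter.2 ⟨mem_box.2 fun r => mem_box.1 hb r,
      fun r => (hσ.eq_zero_iff r).not.2 (mem_reps.1 r.2).1, fun r r' h => Subtype.ext ?_⟩
    have hrel : coordSetoid p r r' :=
      (Int.natAbs_eq_natAbs_iff.1 h).imp (hσ.eq_iff r r').1 (hσ.eq_neg_iff r r').1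
    rw [← rep_coe r, ← rep_coe r', rep_eq_of_rel hrel]
  · obtain ⟨hb, hf₀, hf⟩ := mem_filter.1 hf
    refine mem_filter.2 ⟨mem_box.2 fun i => ?_, hasPattern_lift hf₀ hf⟩
    by_cases h : CoordZero p i
    · rw [lift_of_coordZero f h, abs_zero]
      exact Int.natCast_nonneg k
    · rw [Int.abs_eq_natAbs, natAbs_lift f h, ← Int.abs_eq_natAbs]
      exact mem_box.1 hb _

end Coordinates

section Flats

variable {n k : ℕ} {p : Set (Fin n → ℝ)} {σ : Fin n → ℤ} {G : SGraph (Fin n)}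

theorem mem_of_respects (hp : IsFlat n p) {y : Fin n → ℝ} (hy : Respects p y) : y ∈ p := by
  obtain ⟨S, hS, rfl⟩ := hp
  refine Set.mem_sInter.2 fun H hH => ?_
  have hsub : ∀ x ∈ ⋂₀ S, x ∈ H := fun x hx => Set.mem_sInter.1 hx H hH
  rcases hS hH with ⟨i, j, -, rfl | rfl⟩ | ⟨i, rfl⟩
  exacts [hy.eq i j hsub, hy.neg i j hsub, hy.zero i hsub]

theorem range_lift (hp : IsFlat n p) : Set.range (lift p) = p :=
  Set.Subset.antisymm (Set.range_subset_iff.2 fun f => mem_of_respects hp (respects_lift f))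
    fun _ hy => ⟨_, lift_restrict (respects_of_mem hy)⟩

theorem finrank_span_eq_card_reps (hp : IsFlat n p) :
    Module.finrank ℝ (Submodule.span ℝ p) = #(reps p) := by
  have hrange : Submodule.span ℝ p = LinearMap.range (liftₗ p) := by
    rw [← Submodule.span_eq (LinearMap.range (liftₗ p)), LinearMap.coe_range]
    exact congrArg _ (range_lift hp).symm
  rw [hrange, LinearMap.finrank_range_of_inj lift_injective, Module.finrank_fintype_fun_eq_card,
    Fintype.card_coe]

theorem rk_eq_sub_card_reps (hp : IsFlat n p) : rk n p = n - #(reps p) := by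
  rw [rk, finrank_span_eq_card_reps hp]

def minFlat (σ : Fin n → ℤ) : Set (Fin n → ℝ) := ⋂₀ {H | H ∈ BCn n ∧ Int.cast ∘ σ ∈ H}

theorem isFlat_minFlat (σ : Fin n → ℤ) : IsFlat n (minFlat σ) :=
  ⟨_, fun _ hH => hH.1, rfl⟩

theorem minFlat_subset_iff {H : Set (Fin n → ℝ)} (hH : H ∈ BCn n) :
    minFlat σ ⊆ H ↔ Int.cast ∘ σ ∈ H :=
  ⟨fun h => h (Set.mem_sInter.2 fun _ hH' => hH'.2), fun h => Set.sInter_subset_of_mem ⟨hH, h⟩⟩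

theorem eq_sInter_of_isFlat (hp : IsFlat n p) : p = ⋂₀ {H | H ∈ BCn n ∧ p ⊆ H} := by
  obtain ⟨S, hS, rfl⟩ := hp
  exact Set.Subset.antisymm (fun x hx H hH => hH.2 hx)
    (Set.sInter_subset_sInter fun H hH => ⟨hS hH, Set.sInter_subset_of_mem hH⟩)

theorem minFlat_eq_iff (hp : IsFlat n p) :
    minFlat σ = p ↔ ∀ H ∈ BCn n, (Int.cast ∘ σ ∈ H ↔ p ⊆ H) := by
  refine ⟨fun h H hH => h ▸ (minFlat_subset_iff hH).symm, fun h => ?_⟩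
  rw [eq_sInter_of_isFlat hp, minFlat]
  congr 1
  ext H
  exact and_congr_right (h H)

theorem minFlat_eq_iff_hasPattern (hp : IsFlat n p) : minFlat σ = p ↔ HasPattern p σ := by
  rw [minFlat_eq_iff hp]
  refine ⟨fun h => ?_, fun h => ?_⟩
  · have hz : ∀ i, σ i = 0 ↔ CoordZero p i := fun i => by
      rw [coordZero_iff_subset, ← h _ (.inr ⟨i, rfl⟩)]
      simp
    refine ⟨hz, fun i j => ?_, fun i j => ?_⟩ <;> rcases eq_or_ne i j with rfl | hij
    · exact iff_of_true rfl (.refl p i)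
    · rw [coordEq_iff_subset, ← h _ (.inl ⟨i, j, hij, .inl rfl⟩)]
      simp
    · rw [coordNeg_self_iff, ← hz i]
      omega
    · rw [coordNeg_iff_subset, ← h _ (.inl ⟨i, j, hij, .inr rfl⟩)]
      simp [← Int.cast_neg]
  · rintro H (⟨i, j, -, rfl | rfl⟩ | ⟨i, rfl⟩)
    · rw [← coordEq_iff_subset, ← h.eq_iff i j]
      simp
    · rw [← coordNeg_iff_subset, ← h.eq_neg_iff i j]
      simp [← Int.cast_neg]
    · rw [← coordZero_iff_subset, ← h.eq_zero_iff i]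
      simp

theorem hypOfEdge_mem_BCn (hG : NoBadLoops G) (e : G.E) : hypOfEdge (G.edge e) ∈ BCn n := by
  obtain ⟨hpos, hfree⟩ := hG e
  cases hE : G.edge e with
  | full i j s =>
    rcases eq_or_ne i j with rfl | hij
    · cases s
      · exact .inr ⟨i, Set.ext fun x => show x i = -x i ↔ x i = 0 from CharZero.eq_neg_self_iff⟩
      · exact absurd hE (hpos i)
    · cases s
      exacts [.inl ⟨i, j, hij, .inr rfl⟩, .inl ⟨i, j, hij, .inl rfl⟩]
  | half i s => exact .inr ⟨i, rfl⟩
  | free => exact absurd hE hfree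

theorem properAt_iff_not_mem (σ : Fin n → ℤ) (E : SEdge (Fin n)) :
    properAt σ E ↔ Int.cast ∘ σ ∉ hypOfEdge E := by
  cases E with
  | full i j s => cases s <;> simp [properAt, hypOfEdge, ← Int.cast_neg]
  | half i s => simp [properAt, hypOfEdge]
  | free => simp [properAt, hypOfEdge]

theorem proper_iff_minFlat (hG : NoBadLoops G) :
    Proper G k σ ↔ σ ∈ box (Fin n) k ∧ ∀ e, ¬ minFlat σ ⊆ hypOfEdge (G.edge e) := by
  simp only [Proper, mem_box, properAt_iff_not_mem, minFlat_subset_iff (hypOfEdge_mem_BCn hG _)]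

open scoped Classical in
theorem chrom_eq_card_filter_proper {V : Type*} [Fintype V] (G : SGraph V) (k : ℕ) :
    chrom G k = #{σ ∈ box V k | Proper G k σ} :=
  Nat.subtype_card _ fun σ => by
    rw [mem_filter, mem_box]
    exact ⟨And.right, fun h => ⟨h.1, h⟩⟩

end Flats

end BCFlat

open BCFlat

theorem chrom_eq_sum_whitney {n k : ℕ} (G : SGraph (Fin n))
    (hG : NoBadLoops G)
    (F : Finset (Set (Fin n → ℝ)))
    (hF : ∀ p, p ∈ F ↔ (IsFlat n p ∧ ∀ e, ¬ p ⊆ hypOfEdge (G.edge e))) :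
    chrom G k = ∑ i ∈ Finset.range (n + 1),
      (F.filter fun p => rk n p = n - i).card * (2 ^ i * Nat.descFactorial k i) := by
  classical
  have hflat : ∀ p ∈ F, IsFlat n p := fun p hp => ((hF p).1 hp).1
  have hreps : ∀ p : Set (Fin n → ℝ), #(reps p) ≤ n := fun p =>
    (card_reps_le p).trans_eq (Fintype.card_fin n)
  calc chrom G k = #{σ ∈ box (Fin n) k | minFlat σ ∈ F} := by
        rw [chrom_eq_card_filter_proper]
        refine congrArg card (filter_congr fun σ hσ => ?_)
        rw [proper_iff_minFlat hG, hF, and_iff_right hσ, and_iff_right (isFlat_minFlat σ)]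
    _ = ∑ p ∈ F, #{σ ∈ box (Fin n) k | minFlat σ = p} :=
        (sum_card_fiberwise_eq_card_filter _ _ _).symm
    _ = ∑ p ∈ F, 2 ^ #(reps p) * k.descFactorial #(reps p) := sum_congr rfl fun p hp => by
        rw [filter_congr fun σ _ => minFlat_eq_iff_hasPattern (hflat p hp), card_filter_hasPattern]
    _ = ∑ i ∈ range (n + 1), #{p ∈ F | #(reps p) = i} * (2 ^ i * k.descFactorial i) :=
        sum_comp_eq_sum_range_card_filter F _ (fun i => 2 ^ i * k.descFactorial i)
          fun p _ => hreps p
    _ = _ := sum_congr rfl fun i hi => by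
        congr 2
        refine filter_congr fun p hp => ?_
        have := hreps p
        have := mem_range.1 hi
        rw [rk_eq_sub_card_reps (hflat p hp)]
        omega
end

section
/- Let Σ be a signed graph without positive or free loops, β a Σ-automorphism, and o an acyclic orientation of Σ with corresponding region r(o) of ℝⁿ \ B_Σ. Then β fixes o (equivalently, β maps r(o) to itself) if and only if r(o) ∩ β̂ ≠ ∅. -/
open Equiv Finset

/-!
An automorphism `β = (b, δ)` acts on `ℝⁿ` as a linear map of finite order that maps the
complement of `B_Σ` into itself. Regions are convex, being the sign patterns of the linear
forms cutting out the hyperplanes. If `β` maps a region `r` into itself, the average of the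
`β`-orbit of any point of `r` is a point of `r` fixed by `β`. Conversely, if `β` fixes `x ∈ r`,
it maps the component `r` of `x` into the component of `β x = x`, and a map of finite order
that maps a set into itself maps it onto itself.
-/

theorem IsPreconnected.pos_mul_of_forall_ne_zero {α : Type*} [TopologicalSpace α] {s : Set α}
    (hs : IsPreconnected s) {f : α → ℝ} (hf : ContinuousOn f s) (h0 : ∀ y ∈ s, f y ≠ 0)
    {x y : α} (hx : x ∈ s) (hy : y ∈ s) : 0 < f x * f y := by
  by_contra! h
  obtain ⟨z, hz, hfz⟩ : (0 : ℝ) ∈ f '' s := by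
    rcases mul_nonpos_iff.1 h with ⟨hx', hy'⟩ | ⟨hx', hy'⟩
    · exact hs.intermediate_value hy hx hf ⟨hy', hx'⟩
    · exact hs.intermediate_value hx hy hf ⟨hx', hy'⟩
  exact h0 z hz hfz

section SignPattern

variable {ι E : Type*} [AddCommGroup E] [Module ℝ E]

theorem convex_setOf_forall_pos_mul (f : ι → E →ₗ[ℝ] ℝ) (x : E) :
    Convex ℝ {y | ∀ i, 0 < f i x * f i y} := by
  rw [Set.ofPred_forall]
  exact convex_iInter fun i => by simpa using convex_halfSpace_gt (f i x • f i).isLinear 0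

variable [TopologicalSpace E] [IsTopologicalAddGroup E] [ContinuousSMul ℝ E]

theorem connectedComponentIn_setOf_forall_ne_zero (f : ι → E →L[ℝ] ℝ) {x : E}
    (hx : ∀ i, f i x ≠ 0) :
    connectedComponentIn {y | ∀ i, f i y ≠ 0} x = {y | ∀ i, 0 < f i x * f i y} := by
  set U := {y | ∀ i, f i y ≠ 0}
  have hxU : x ∈ U := hx
  refine subset_antisymm (fun y hy i => ?_) ?_
  · exact isPreconnected_connectedComponentIn.pos_mul_of_forall_ne_zero
      (f i).continuous.continuousOn
      (fun z hz => (connectedComponentIn_subset _ _ hz : z ∈ U) i)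
      (mem_connectedComponentIn hxU) hy
  · refine (convex_setOf_forall_pos_mul (fun i => (f i : E →ₗ[ℝ] ℝ)) x).isPreconnected
      |>.subset_connectedComponentIn (fun i => mul_self_pos.2 (hx i)) ?_
    exact fun y hy i hi => (hy i).ne' (by simp [hi])

theorem convex_connectedComponentIn_setOf_forall_ne_zero (f : ι → E →L[ℝ] ℝ) (x : E) :
    Convex ℝ (connectedComponentIn {y | ∀ i, f i y ≠ 0} x) := by
  by_cases hx : ∀ i, f i x ≠ 0
  · rw [connectedComponentIn_setOf_forall_ne_zero f hx]
    exact convex_setOf_forall_pos_mul (fun i => (f i : E →ₗ[ℝ] ℝ)) x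
  · rw [connectedComponentIn_eq_empty (show x ∉ {y | ∀ i, f i y ≠ 0} from hx)]
    exact convex_empty

end SignPattern

theorem Convex.exists_mem_apply_eq_self {𝕜 E : Type*} [Field 𝕜] [LinearOrder 𝕜]
    [IsStrictOrderedRing 𝕜] [AddCommGroup E] [Module 𝕜 E] {s : Set E} (hs : Convex 𝕜 s)
    {A : Module.End 𝕜 E} (hA : IsOfFinOrder A) (hAs : Set.MapsTo A s s) {x : E} (hx : x ∈ s) :
    ∃ y ∈ s, A y = y := by
  set N := orderOf A
  have hN : 0 < N := hA.orderOf_pos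
  set z : ℕ → E := fun k => (N : 𝕜)⁻¹ • (A ^ k) x
  have hz : ∀ k, A (z k) = z (k + 1) := fun k => by
    simp only [z, map_smul, pow_succ', Module.End.mul_apply]
  have hzN : z N = z 0 := by simp only [z, N, pow_orderOf_eq_one, pow_zero]
  refine ⟨∑ k ∈ range N, z k, hs.sum_mem (fun _ _ => by positivity) ?_ fun k _ => ?_, ?_⟩
  · simp [hN.ne']
  · rw [Module.End.pow_apply]
    exact hAs.iterate k hx
  · rw [map_sum]
    simp only [hz]
    have h := Finset.sum_range_succ' z N
    rw [Finset.sum_range_succ, hzN] at h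
    exact (add_right_cancel h).symm

theorem Set.MapsTo.smul_image_eq_of_isOfFinOrder {M α : Type*} [Monoid M] [MulAction M α] {g : M}
    (hg : IsOfFinOrder g) {s : Set α} (h : Set.MapsTo (g • ·) s s) : (g • ·) '' s = s := by
  refine h.image_subset.antisymm fun x hx => ⟨g ^ (orderOf g - 1) • x, ?_, ?_⟩
  · rw [← smul_iterate_apply]
    exact h.iterate _ hx
  · show g • _ = x
    rw [smul_smul, ← pow_succ', Nat.sub_add_cancel hg.orderOf_pos, pow_orderOf_eq_one, one_smul]

section SignedGraph

variable {n : ℕ}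

/-- The linear form whose kernel is the hyperplane of an edge (zero for a free loop). -/
def edgeForm : SEdge (Fin n) → (Fin n → ℝ) →L[ℝ] ℝ
  | .full i j s => .proj i - if s then .proj j else -.proj j
  | .half i _ => .proj i
  | .free => 0

theorem hypOfEdge_eq_setOf_edgeForm (ed : SEdge (Fin n)) :
    hypOfEdge ed = {x | edgeForm ed x = 0} := by
  ext x
  cases ed with
  | full i j s => cases s <;> simp [hypOfEdge, edgeForm, sub_eq_zero, eq_neg_iff_add_eq_zero]
  | half i s => simp [hypOfEdge, edgeForm]
  | free => simp [hypOfEdge, edgeForm]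

theorem compl_eq_setOf_edgeForm (G : SGraph (Fin n)) :
    compl G = {x | ∀ e, edgeForm (G.edge e) x ≠ 0} := by
  simp [_root_.compl, hypOfEdge_eq_setOf_edgeForm]

theorem IsRegion.convex {G : SGraph (Fin n)} {r : Set (Fin n → ℝ)} (hr : IsRegion G r) :
    Convex ℝ r := by
  obtain ⟨x, -, rfl⟩ := hr
  rw [compl_eq_setOf_edgeForm]
  exact convex_connectedComponentIn_setOf_forall_ne_zero _ x

theorem IsRegion.nonempty {G : SGraph (Fin n)} {r : Set (Fin n → ℝ)} (hr : IsRegion G r) :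
    r.Nonempty := by
  obtain ⟨x, hx, rfl⟩ := hr
  exact ⟨x, mem_connectedComponentIn hx⟩

theorem actR_apply_apply (b : Perm (Fin n)) (δ : Finset (Fin n)) (x : Fin n → ℝ) (i : Fin n) :
    actR b δ x (b i) = (if b i ∈ δ then -1 else 1) * x i := by
  simp [actR]

theorem mem_flatOf_iff (b : Perm (Fin n)) (δ : Finset (Fin n)) (x : Fin n → ℝ) :
    x ∈ flatOf b δ ↔ actR b δ x = x := by
  simp [flatOf, funext_iff, actR, eq_comm]

def actRLinear (b : Perm (Fin n)) (δ : Finset (Fin n)) : Module.End ℝ (Fin n → ℝ) where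
  toFun := actR b δ
  map_add' x y := by ext i; simp [actR, mul_add]
  map_smul' c x := by ext i; simp [actR, mul_left_comm]

@[simp]
theorem coe_actRLinear (b : Perm (Fin n)) (δ : Finset (Fin n)) : ⇑(actRLinear b δ) = actR b δ :=
  rfl

theorem exists_actR_iterate_eq (b : Perm (Fin n)) (δ : Finset (Fin n)) (k : ℕ) :
    ∃ c : Fin n → ℝ, (∀ i, c i * c i = 1) ∧
      ∀ x i, (actR b δ)^[k] x i = c i * x ((b ^ k)⁻¹ i) := by
  induction k with
  | zero => exact ⟨1, fun _ => mul_one 1, fun x i => by simp⟩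
  | succ k ih =>
    obtain ⟨c, hc, hck⟩ := ih
    refine ⟨fun i => (if i ∈ δ then -1 else 1) * c (b⁻¹ i), fun i => ?_, fun x i => ?_⟩
    · have := hc (b⁻¹ i)
      dsimp only
      split_ifs <;> linear_combination this
    · rw [Function.iterate_succ_apply', pow_succ', mul_inv_rev, Perm.mul_apply, mul_assoc, ← hck]
      rfl

theorem isOfFinOrder_actRLinear (b : Perm (Fin n)) (δ : Finset (Fin n)) :
    IsOfFinOrder (actRLinear b δ) := by
  refine isOfFinOrder_iff_pow_eq_one.2 ⟨2 * orderOf b, Nat.mul_pos two_pos (orderOf_pos b), ?_⟩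
  obtain ⟨c, hc, hcb⟩ := exists_actR_iterate_eq b δ (orderOf b)
  refine LinearMap.ext fun x => funext fun i => ?_
  simp only [Module.End.pow_apply, coe_actRLinear, two_mul, Function.iterate_add_apply, hcb,
    pow_orderOf_eq_one, inv_one, Perm.one_apply, ← mul_assoc, hc, one_mul, Module.End.one_apply]

/-- Only an inclusion: `actEdge` counts `δ` on the set `{b i, b i}`, so it can turn a negative
loop into a positive one, whose hyperplane is all of `ℝⁿ`. -/
theorem preimage_hypOfEdge_actEdge_subset (b : Perm (Fin n)) (δ : Finset (Fin n))
    (ed : SEdge (Fin n)) (h : hypOfEdge (actEdge b δ ed) ≠ Set.univ) :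
    actR b δ ⁻¹' hypOfEdge (actEdge b δ ed) ⊆ hypOfEdge ed := by
  intro x hx
  cases ed with
  | free => exact absurd rfl h
  | half i s =>
    simp only [actEdge, hypOfEdge, Set.mem_preimage, Set.mem_ofPred_eq, actR_apply_apply] at hx ⊢
    split_ifs at hx <;> linarith
  | full i j s =>
    obtain rfl | hij := eq_or_ne i j
    · cases s
      · by_cases hi : b i ∈ δ
        · exact absurd (by ext; simp [actEdge, hypOfEdge, hi]) h
        · simpa [actEdge, hypOfEdge, actR_apply_apply, hi] using hx
      · simp [hypOfEdge]
    · have hbij : b i ≠ b j := b.injective.ne hij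
      simp only [actEdge, hypOfEdge, Set.mem_preimage, Set.mem_ofPred_eq, actR_apply_apply] at hx ⊢
      by_cases hi : b i ∈ δ <;> by_cases hj : b j ∈ δ <;> cases s <;>
        simp [hi, hj, hbij, insert_inter_of_mem, insert_inter_of_notMem, Nat.odd_iff] at hx ⊢ <;>
        linarith

theorem IsAut.mapsTo_compl {b : Perm (Fin n)} {δ : Finset (Fin n)} {G : SGraph (Fin n)}
    (hb : IsAut b δ G) : Set.MapsTo (actR b δ) (compl G) (compl G) := by
  obtain ⟨φ, hφ⟩ := hb
  intro x hx e hxe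
  have he := hφ (φ.symm e)
  rw [φ.apply_symm_apply] at he
  rw [he] at hxe
  exact hx (φ.symm e) <| preimage_hypOfEdge_actEdge_subset b δ _
    (fun huniv => hx e (by rw [he, huniv]; trivial)) hxe

theorem IsAut.mapsTo_region {b : Perm (Fin n)} {δ : Finset (Fin n)} {G : SGraph (Fin n)}
    (hb : IsAut b δ G) {x : Fin n → ℝ} (hx : x ∈ compl G) (hfix : actR b δ x = x) :
    Set.MapsTo (actR b δ) (connectedComponentIn (compl G) x) (connectedComponentIn (compl G) x) := by
  have h := (actRLinear b δ).continuous_of_finiteDimensional.continuousOn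
    |>.mapsTo_connectedComponentIn hx
  rw [coe_actRLinear, hfix] at h
  exact h.mono_right (connectedComponentIn_mono _ hb.mapsTo_compl.image_subset)

end SignedGraph

theorem region_fixed_iff_meets_flat_general {n : ℕ} (G : SGraph (Fin n))
    (b : Equiv.Perm (Fin n)) (δ : Finset (Fin n)) (hb : IsAut b δ G)
    (r : Set (Fin n → ℝ)) (hr : IsRegion G r) :
    actR b δ '' r = r ↔ (r ∩ flatOf b δ).Nonempty := by
  have hfin := isOfFinOrder_actRLinear b δ
  constructor
  · intro hr_fixed
    obtain ⟨x, hx⟩ := hr.nonempty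
    obtain ⟨y, hy, hfix⟩ := hr.convex.exists_mem_apply_eq_self hfin
      (Set.mapsTo_iff_image_subset.2 hr_fixed.subset) hx
    exact ⟨y, hy, (mem_flatOf_iff b δ y).2 hfix⟩
  · rintro ⟨x, hxr, hxf⟩
    obtain ⟨x₀, -, rfl⟩ := hr
    rw [connectedComponentIn_eq hxr]
    exact (hb.mapsTo_region (connectedComponentIn_subset _ _ hxr)
      ((mem_flatOf_iff b δ x).1 hxf)).smul_image_eq_of_isOfFinOrder hfin

theorem region_fixed_iff_meets_flat {n : ℕ} (G : SGraph (Fin n))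
    (hG : NoBadLoops G)
    (b : Equiv.Perm (Fin n)) (δ : Finset (Fin n)) (hb : IsAut b δ G)
    (r : Set (Fin n → ℝ)) (hr : IsRegion G r) :
    actR b δ '' r = r ↔ (r ∩ flatOf b δ).Nonempty :=
  region_fixed_iff_meets_flat_general G b δ hb r hr
end

section
/- Let β = (b, δ) be a signed permutation and suppose e is an edge of Σ with both distinct endpoints i, j lying in the same cycle C_s of b with |C_s ∩ δ| even. If a proper signed coloring σ of Σ lies in the fixed flat β̂, then σ(i) ≠ 0 and σ(j) ≠ 0. -/
open Equiv Finset

theorem endpoints_nonzero_of_same_cycle {n k : ℕ} (G : SGraph (Fin n))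
    (b : Equiv.Perm (Fin n)) (δ : Finset (Fin n))
    (e : G.E) (i j : Fin n) (s : Bool)
    (he : G.edge e = .full i j s) (hij : i ≠ j)
    (hsc : b.SameCycle i j) (heven : Even ((cyc b i ∩ δ).card))
    (σ : Fin n → ℤ) (hσ : Proper G k σ)
    (hflat : (fun t => (σ t : ℝ)) ∈ flatOf b δ) :
    σ i ≠ 0 ∧ σ j ≠ 0 := by
  have hkey : ∀ t, σ (b⁻¹ t) = 0 ↔ σ t = 0 := by
    intro t
    have h := Set.mem_iInter.mp hflat t
    simp only [Set.mem_setOf_eq] at h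
    constructor
    · intro h0
      have : (σ t : ℝ) = 0 := by rw [h, h0]; simp
      exact_mod_cast this
    · intro h0
      have h0' : (σ t : ℝ) = 0 := by exact_mod_cast h0
      rw [h0'] at h
      rcases mul_eq_zero.mp h.symm with h1 | h1
      · exfalso; split at h1 <;> norm_num at h1
      · exact_mod_cast h1
  have hb : ∀ t, σ (b t) = 0 ↔ σ t = 0 := by
    intro t
    have := hkey (b t)
    simpa using this.symm
  have hpow : ∀ m : ℕ, ∀ t, σ ((b ^ m) t) = 0 ↔ σ t = 0 := by
    intro m
    induction m with
    | zero => simp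
    | succ m ih =>
      intro t
      rw [pow_succ]
      simp only [Equiv.Perm.mul_apply]
      rw [ih, hb]
  obtain ⟨l, hl, _, hlj⟩ := Equiv.Perm.SameCycle.exists_pow_eq b hsc
  have hiff : σ j = 0 ↔ σ i = 0 := by rw [← hlj]; exact hpow l i
  have hprop := hσ.2 e
  rw [he] at hprop
  have hi : σ i ≠ 0 := by
    intro h0
    have hj0 : σ j = 0 := hiff.mpr h0
    apply hprop
    rw [h0, hj0]
    cases s <;> simp
  exact ⟨hi, fun h0 => hi (hiff.mp h0)⟩
end
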